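/- arXiv:2010.00825 — 16 statements merged into one kernel-verified Lean document; each statement's English description precedes it below -/
import Mathlib

section
/- Let τ be a Boolean type of net with nop ∈ τ and let A be an initialized transition system. Then there is a τ-separative set of τ-regions of A if and only if there is a τ-separative set of normalized τ-regions of A. -/
/-!  Common framework: Boolean types of nets, transition systems (as labeled
edge relations), τ-regions, state separation. -/

inductive Interaction : Type
  | nop | inp | out | res | set | swap | used | free
  deriving DecidableEq

/-- The partial function on `{0,1}` (encoded as `Bool`, `false = 0`, `true = 1`)
defined by a Boolean interaction. -/
def Interaction.eval : Interaction → Bool → Option Bool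
  | .nop, x => some x
  | .inp, true => some false
  | .inp, false => none
  | .out, false => some true
  | .out, true => none
  | .res, _ => some false
  | .set, _ => some true
  | .swap, x => some (!x)
  | .used, true => some true
  | .used, false => none
  | .free, false => some false
  | .free, true => none

/-- `(sup, sig)` is a `τ`-region of the transition system given by the labeled
edge relation `edge`. -/
def IsRegion {S E : Type} (edge : S → E → S → Prop) (τ : Set Interaction)
    (sup : S → Bool) (sig : E → Interaction) : Prop :=
  (∀ e, sig e ∈ τ) ∧
    ∀ s e s', edge s e s' → (sig e).eval (sup s) = some (sup s')

/-- The `τ`-state separation property: every pair of distinct states (SSP atom)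
is solved by some `τ`-region. -/
def HasSSP {S E : Type} (edge : S → E → S → Prop) (τ : Set Interaction) : Prop :=
  ∀ s s' : S, s ≠ s' → ∃ sup sig, IsRegion edge τ sup sig ∧ sup s ≠ sup s'

def Deterministic {S E : Type} (edge : S → E → S → Prop) : Prop :=
  ∀ s e s₁ s₂, edge s e s₁ → edge s e s₂ → s₁ = s₂

inductive Reachable {S E : Type} (edge : S → E → S → Prop) : S → S → Prop
  | refl (s : S) : Reachable edge s s
  | tail {s t u : S} {e : E} : Reachable edge s t → edge t e u → Reachable edge s u

/-- `ι` is an initial state from which every state is reachable. -/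
def Initialized {S E : Type} (edge : S → E → S → Prop) (ι : S) : Prop :=
  ∀ s, Reachable edge ι s

def LoopFree {S E : Type} (edge : S → E → S → Prop) : Prop :=
  ∀ s e s', edge s e s' → s ≠ s'

def BiDirected {S E : Type} (edge : S → E → S → Prop) : Prop :=
  LoopFree edge ∧ ∀ s e s', edge s e s' → edge s' e s

/-- A region is normalized (for a `nop`-equipped type): no event has signature
`used` or `free`, and every event with signature in `{inp,out,res,set,swap}`
has an edge on which the support changes. -/
def Normalized {S E : Type} (edge : S → E → S → Prop)
    (sup : S → Bool) (sig : E → Interaction) : Prop :=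
  ∀ e, (sig e ≠ Interaction.used ∧ sig e ≠ Interaction.free) ∧
    ((sig e = Interaction.inp ∨ sig e = Interaction.out ∨ sig e = Interaction.res ∨
        sig e = Interaction.set ∨ sig e = Interaction.swap) →
      ∃ s s', edge s e s' ∧ sup s ≠ sup s')

/-- save = save₁ ∪ save₀ = {nop,set,used} ∪ {nop,res,free}. -/
def saveSet : Set Interaction :=
  {Interaction.nop, Interaction.set, Interaction.used, Interaction.res, Interaction.free}

/-- A set of `τ`-regions is `τ`-separative if every SSP atom is solved by a
region of the set. -/
def Separative {S E : Type} (edge : S → E → S → Prop) (τ : Set Interaction)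
    (R : Set ((S → Bool) × (E → Interaction))) : Prop :=
  (∀ r ∈ R, IsRegion edge τ r.1 r.2) ∧
    ∀ s s' : S, s ≠ s' → ∃ r ∈ R, r.1 s ≠ r.1 s'

/-- for a `nop`-equipped Boolean type of nets `τ` and an
initialized TS `A`, there is a `τ`-separative set of `τ`-regions of `A`
iff there is a `τ`-separative set of normalized `τ`-regions of `A`. -/
theorem separative_iff_normalized_separative
    {S E : Type} [Finite S] [Finite E]
    (edge : S → E → S → Prop) (hdet : Deterministic edge)
    (ι : S) (hinit : Initialized edge ι)
    (τ : Set Interaction) (hnop : Interaction.nop ∈ τ) :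
    (∃ R, Separative edge τ R) ↔
      ∃ R, Separative edge τ R ∧ ∀ r ∈ R, Normalized edge r.1 r.2 := by
  classical
  constructor
  · rintro ⟨R, hreg, hsep⟩
    set f : (S → Bool) × (E → Interaction) → (S → Bool) × (E → Interaction) :=
      fun r => (r.1, fun e =>
        if ∃ s s', edge s e s' ∧ r.1 s ≠ r.1 s' then r.2 e else Interaction.nop) with hf
    refine ⟨f '' R, ⟨?_, ?_⟩, ?_⟩
    · rintro r' ⟨r, hrR, rfl⟩
      obtain ⟨hmem, hedge⟩ := hreg r hrR
      constructor
      · intro e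
        simp only [hf]
        split
        · exact hmem e
        · exact hnop
      · intro s e s' he
        simp only [hf]
        split
        next h => exact hedge s e s' he
        next h =>
          push_neg at h
          simp [Interaction.eval, h s s' he]
    · intro s s' hne
      obtain ⟨r, hrR, hr⟩ := hsep s s' hne
      exact ⟨f r, ⟨r, hrR, rfl⟩, hr⟩
    · rintro r' ⟨r, hrR, rfl⟩
      obtain ⟨hmem, hedge⟩ := hreg r hrR
      intro e
      simp only [hf]
      constructor
      · split
        next h =>
          obtain ⟨s, s', he, hne⟩ := h
          have hev := hedge s e s' he
          constructor
          · intro hu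
            rw [hu] at hev
            cases hs : r.1 s <;> rw [hs] at hev <;>
              simp [Interaction.eval] at hev
            exact hne (by rw [hs, hev])
          · intro hu
            rw [hu] at hev
            cases hs : r.1 s <;> rw [hs] at hev <;>
              simp [Interaction.eval] at hev
            exact hne (by rw [hs, hev])
        next h => simp
      · intro h5
        split at h5
        next h => exact h
        next h => rcases h5 with h | h | h | h | h <;> simp at h
  · rintro ⟨R, hR, _⟩
    exact ⟨R, hR⟩
end

section
/- Let τ0={nop,inp,out} and τ={nop,out,res} ∪ ω with ω ⊆ {inp,used,free}. Let A be a loop-free initialized transition system, B its backward-extension, and sup: S_A → {0,1}. Then sup allows a τ0-region (sup,sig) of A if and only if sup allows a normalized τ-region (sup,sig') of B. -/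
/-- The backward-extension `B` of a loop-free TS `A`: events are `E ⊕ E`
(`Sum.inl e` is `e`, `Sum.inr e` is the fresh event `ē`); every edge
`s →e s'` of `A` yields the edges `s →e s'` and `s' →ē s`. -/
def backwardExt {S E : Type} (edge : S → E → S → Prop) : S → E ⊕ E → S → Prop
  | s, Sum.inl e, s' => edge s e s'
  | s, Sum.inr e, s' => edge s' e s

/-- The oneway loop-extension `C` of a loop-free TS `A`: every edge `s →e s'`
of `A` yields the edges `s →e s'`, `s' →ē s` and the loop `s' →e s'`. -/
def onewayLoopExt {S E : Type} (edge : S → E → S → Prop) : S → E ⊕ E → S → Prop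
  | s, Sum.inl e, s' => edge s e s' ∨ (s = s' ∧ ∃ q, edge q e s')
  | s, Sum.inr e, s' => edge s' e s

/-- The loop-extension `D` of a loop-free TS `A`: every edge `s →e s'` of `A`
yields the edges `s →e s'`, `s' →ē s` and the loops `s' →e s'` and `s →ē s`. -/
def loopExt {S E : Type} (edge : S → E → S → Prop) : S → E ⊕ E → S → Prop
  | s, Sum.inl e, s' => edge s e s' ∨ (s = s' ∧ ∃ q, edge q e s')
  | s, Sum.inr e, s' => edge s' e s ∨ (s = s' ∧ ∃ q, edge s e q)

/-- Auxiliary uniformity fact for signatures in `{nop, inp, out, res}`. -/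
lemma interaction_key_aux (i j : Interaction) (a b c d : Bool)
    (hi : i = Interaction.nop ∨ i = Interaction.inp ∨ i = Interaction.out ∨
      i = Interaction.res)
    (hj : j = Interaction.nop ∨ j = Interaction.inp ∨ j = Interaction.out ∨
      j = Interaction.res)
    (h1 : i.eval a = some b) (h2 : j.eval b = some a)
    (h3 : i.eval c = some d) (h4 : j.eval d = some c)
    (hne : a ≠ b) : c = a ∧ d = b := by
  rcases hi with hi | hi | hi | hi <;> rcases hj with hj | hj | hj | hj <;>
    subst hi <;> subst hj <;>
    cases a <;> cases b <;> cases c <;> cases d <;>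
    simp_all [Interaction.eval]

/-- for `τ₀ = {nop,inp,out}` and `τ = {nop,out,res} ∪ ω` with
`ω ⊆ {inp,used,free}`, a support `sup` of a loop-free initialized TS `A`
allows a `τ₀`-region of `A` iff it allows a normalized `τ`-region of the
backward-extension `B` of `A`. -/
theorem backward_extension_region
    {S E : Type} [Finite S] [Finite E]
    (edge : S → E → S → Prop) (hdet : Deterministic edge)
    (ι : S) (hinit : Initialized edge ι) (hlf : LoopFree edge)
    (ω : Set Interaction)
    (hω : ω ⊆ {Interaction.inp, Interaction.used, Interaction.free})
    (sup : S → Bool) :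
    (∃ sig : E → Interaction,
        IsRegion edge {Interaction.nop, Interaction.inp, Interaction.out} sup sig) ↔
      ∃ sig' : E ⊕ E → Interaction,
        IsRegion (backwardExt edge)
          ({Interaction.nop, Interaction.out, Interaction.res} ∪ ω) sup sig' ∧
          Normalized (backwardExt edge) sup sig' := by
  classical
  constructor
  · rintro ⟨sig, hmem, hreg⟩
    refine ⟨fun ε => Sum.elim
        (fun e => if (∃ a b, edge a e b) then
          (match sig e with
            | .inp => Interaction.res
            | .out => Interaction.out
            | _ => Interaction.nop) else Interaction.nop)
        (fun e => if (∃ a b, edge a e b) then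
          (match sig e with
            | .inp => Interaction.out
            | .out => Interaction.res
            | _ => Interaction.nop) else Interaction.nop) ε, ⟨?_, ?_⟩, ?_⟩
    · -- membership
      intro ε
      refine Set.mem_union_left _ ?_
      rcases ε with e | e <;> simp only [Sum.elim_inl, Sum.elim_inr] <;>
        split <;> cases hc : sig e <;> simp
    · -- region condition
      intro s ε s' hB
      rcases ε with e | e
      · have hA : edge s e s' := hB
        have hex : ∃ a b, edge a e b := ⟨s, s', hA⟩
        have h := hreg s e s' hA
        have hm := hmem e
        simp only [Sum.elim_inl, if_pos hex]
        cases hc : sig e <;> rw [hc] at h hm <;>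
          cases hvs : sup s <;> cases hvs' : sup s' <;>
          simp_all [Interaction.eval]
      · have hA : edge s' e s := hB
        have hex : ∃ a b, edge a e b := ⟨s', s, hA⟩
        have h := hreg s' e s hA
        have hm := hmem e
        simp only [Sum.elim_inr, if_pos hex]
        cases hc : sig e <;> rw [hc] at h hm <;>
          cases hvs : sup s <;> cases hvs' : sup s' <;>
          simp_all [Interaction.eval]
    · -- normalized
      intro ε
      constructor
      · rcases ε with e | e <;> simp only [Sum.elim_inl, Sum.elim_inr] <;>
          split <;> cases hc : sig e <;> simp
      · rcases ε with e | e
        · simp only [Sum.elim_inl]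
          by_cases hx : ∃ a b, edge a e b
          · rw [if_pos hx]
            obtain ⟨a, b, hab⟩ := hx
            have h := hreg a e b hab
            have hm := hmem e
            simp only [Set.mem_insert_iff, Set.mem_singleton_iff] at hm
            rcases hm with hc | hc | hc <;> rw [hc] at h <;> rw [hc] <;> intro hd
            · simp at hd
            · have hv : sup a = true ∧ sup b = false := by
                cases hva : sup a <;> cases hvb : sup b <;>
                  rw [hva, hvb] at h <;> simp [Interaction.eval] at h <;>
                  exact ⟨rfl, rfl⟩
              exact ⟨a, b, hab, by rw [hv.1, hv.2]; simp⟩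
            · have hv : sup a = false ∧ sup b = true := by
                cases hva : sup a <;> cases hvb : sup b <;>
                  rw [hva, hvb] at h <;> simp [Interaction.eval] at h <;>
                  exact ⟨rfl, rfl⟩
              exact ⟨a, b, hab, by rw [hv.1, hv.2]; simp⟩
          · rw [if_neg hx]; intro hd; simp at hd
        · simp only [Sum.elim_inr]
          by_cases hx : ∃ a b, edge a e b
          · rw [if_pos hx]
            obtain ⟨a, b, hab⟩ := hx
            have h := hreg a e b hab
            have hm := hmem e
            simp only [Set.mem_insert_iff, Set.mem_singleton_iff] at hm
            rcases hm with hc | hc | hc <;> rw [hc] at h <;> rw [hc] <;> intro hd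
            · simp at hd
            · have hv : sup a = true ∧ sup b = false := by
                cases hva : sup a <;> cases hvb : sup b <;>
                  rw [hva, hvb] at h <;> simp [Interaction.eval] at h <;>
                  exact ⟨rfl, rfl⟩
              exact ⟨b, a, hab, by rw [hv.1, hv.2]; simp⟩
            · have hv : sup a = false ∧ sup b = true := by
                cases hva : sup a <;> cases hvb : sup b <;>
                  rw [hva, hvb] at h <;> simp [Interaction.eval] at h <;>
                  exact ⟨rfl, rfl⟩
              exact ⟨b, a, hab, by rw [hv.1, hv.2]; simp⟩
          · rw [if_neg hx]; intro hd; simp at hd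
  · rintro ⟨sig', ⟨hmem', hreg'⟩, hnorm⟩
    -- every signature in B is nop, inp, out or res
    have hE : ∀ ε, sig' ε = Interaction.nop ∨ sig' ε = Interaction.inp ∨
        sig' ε = Interaction.out ∨ sig' ε = Interaction.res := by
      intro ε
      have hm := hmem' ε
      have hn := (hnorm ε).1
      rcases hm with hm | hm
      · simp only [Set.mem_insert_iff, Set.mem_singleton_iff] at hm
        tauto
      · have := hω hm
        simp only [Set.mem_insert_iff, Set.mem_singleton_iff] at this
        tauto
    -- key uniformity: if one edge of e changes the support, all edges of e
    -- change it in the same direction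
    have key : ∀ e s s' t t', edge s e s' → edge t e t' → sup s ≠ sup s' →
        sup t = sup s ∧ sup t' = sup s' := by
      intro e s s' t t' hs ht hne
      have h1 := hreg' s (Sum.inl e) s' hs
      have h2 := hreg' s' (Sum.inr e) s hs
      have h3 := hreg' t (Sum.inl e) t' ht
      have h4 := hreg' t' (Sum.inr e) t ht
      exact interaction_key_aux _ _ _ _ _ _ (hE (Sum.inl e)) (hE (Sum.inr e))
        h1 h2 h3 h4 hne
    refine ⟨fun e =>
      if (∃ a b, edge a e b ∧ sup a = true ∧ sup b = false) then Interaction.inp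
      else if (∃ a b, edge a e b ∧ sup a = false ∧ sup b = true) then Interaction.out
      else Interaction.nop, ?_, ?_⟩
    · intro e; dsimp only; split_ifs <;> simp
    · intro s e s' hA
      dsimp only
      split_ifs with h1 h2
      · obtain ⟨a, b, hab, hva, hvb⟩ := h1
        have hk := key e a b s s' hab hA (by rw [hva, hvb]; simp)
        rw [hk.1, hk.2, hva, hvb]
        rfl
      · obtain ⟨a, b, hab, hva, hvb⟩ := h2
        have hk := key e a b s s' hab hA (by rw [hva, hvb]; simp)
        rw [hk.1, hk.2, hva, hvb]
        rfl
      · have hss : sup s = sup s' := by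
          by_contra hne
          cases hvs : sup s <;> cases hvs' : sup s' <;> rw [hvs, hvs'] at hne
          · exact hne rfl
          · exact h2 ⟨s, s', hA, hvs, hvs'⟩
          · exact h1 ⟨s, s', hA, hvs, hvs'⟩
          · exact hne rfl
        rw [hss]; rfl
end

section
/- Let τ0={nop,inp,out} and let τ be a Boolean type of net with {nop,res,set} ⊆ τ. Let A be a loop-free initialized transition system, D its loop-extension, and sup: S_A → {0,1}. Then sup allows a τ0-region (sup,sig) of A if and only if sup allows a normalized τ-region (sup,sig') of D. -/
private lemma eval_inp' {x y : Bool} (h : Interaction.eval Interaction.inp x = some y) :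
    x = true ∧ y = false := by
  cases x <;> simp_all [Interaction.eval]

private lemma eval_out' {x y : Bool} (h : Interaction.eval Interaction.out x = some y) :
    x = false ∧ y = true := by
  cases x <;> simp_all [Interaction.eval]
/-- for `τ₀ = {nop,inp,out}` and any Boolean type of nets `τ` with
`{nop,res,set} ⊆ τ`, a support `sup` of a loop-free initialized TS `A` allows a
`τ₀`-region of `A` iff it allows a normalized `τ`-region of the loop-extension
`D` of `A`. -/
theorem loop_extension_region
    {S E : Type} [Finite S] [Finite E]
    (edge : S → E → S → Prop) (hdet : Deterministic edge)
    (ι : S) (hinit : Initialized edge ι) (hlf : LoopFree edge)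
    (τ : Set Interaction)
    (hτ : {Interaction.nop, Interaction.res, Interaction.set} ⊆ τ)
    (sup : S → Bool) :
    (∃ sig : E → Interaction,
        IsRegion edge {Interaction.nop, Interaction.inp, Interaction.out} sup sig) ↔
      ∃ sig' : E ⊕ E → Interaction,
        IsRegion (loopExt edge) τ sup sig' ∧ Normalized (loopExt edge) sup sig' := by
  classical
  constructor
  · rintro ⟨sig, hmem, hedge⟩
    simp only [Set.mem_insert_iff, Set.mem_singleton_iff] at hmem
    refine ⟨fun x => match x with
      | Sum.inl e => if (∃ a b, edge a e b) then
          (match sig e with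
           | Interaction.inp => Interaction.res
           | Interaction.out => Interaction.set
           | _ => Interaction.nop) else Interaction.nop
      | Sum.inr e => if (∃ a b, edge a e b) then
          (match sig e with
           | Interaction.inp => Interaction.set
           | Interaction.out => Interaction.res
           | _ => Interaction.nop) else Interaction.nop,
      ⟨?_, ?_⟩, ?_⟩
    · rintro (e | e) <;> dsimp only <;> split <;> apply hτ <;>
        rcases hmem e with hm | hm | hm <;> simp [hm]
    · rintro s (e | e) s' h
      · have hex : ∃ a b, edge a e b := by
          rcases h with h | ⟨heq, q, hq⟩
          exacts [⟨s, s', h⟩, ⟨q, s', hq⟩]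
        dsimp only
        rw [if_pos hex]
        rcases h with h | h
        · have hE := hedge s e s' h
          rcases hmem e with hm | hm | hm <;>
            cases hs : sup s <;> cases hs' : sup s' <;>
            simp_all [Interaction.eval]
        · obtain ⟨heq, q, hq⟩ := h
          have hE := hedge q e _ hq
          rcases hmem e with hm | hm | hm <;>
            cases hq' : sup q <;> cases hs' : sup s' <;>
            simp_all [Interaction.eval]
      · have hex : ∃ a b, edge a e b := by
          rcases h with h | ⟨heq, q, hq⟩
          exacts [⟨s', s, h⟩, ⟨s, q, hq⟩]
        dsimp only
        rw [if_pos hex]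
        rcases h with h | h
        · have hE := hedge s' e s h
          rcases hmem e with hm | hm | hm <;>
            cases hs : sup s <;> cases hs' : sup s' <;>
            simp_all [Interaction.eval]
        · obtain ⟨heq, q, hq⟩ := h
          have hE := hedge _ e q hq
          rcases hmem e with hm | hm | hm <;>
            cases hq' : sup q <;> cases hs : sup s <;>
            simp_all [Interaction.eval]
    · rintro (e | e) <;> dsimp only <;>
        [skip; skip] <;> by_cases hex : ∃ a b, edge a e b
      · rw [if_pos hex]
        obtain ⟨a, b, hab⟩ := hex
        have hE := hedge a e b hab
        rcases hmem e with hm | hm | hm <;> simp [hm]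
        · obtain ⟨ha, hb⟩ := eval_inp' (by rwa [hm] at hE)
          exact ⟨a, b, Or.inl hab, by simp [ha, hb]⟩
        · obtain ⟨ha, hb⟩ := eval_out' (by rwa [hm] at hE)
          exact ⟨a, b, Or.inl hab, by simp [ha, hb]⟩
      · rw [if_neg hex]; simp
      · rw [if_pos hex]
        obtain ⟨a, b, hab⟩ := hex
        have hE := hedge a e b hab
        rcases hmem e with hm | hm | hm <;> simp [hm]
        · obtain ⟨ha, hb⟩ := eval_inp' (by rwa [hm] at hE)
          exact ⟨b, a, Or.inl hab, by simp [ha, hb]⟩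
        · obtain ⟨ha, hb⟩ := eval_out' (by rwa [hm] at hE)
          exact ⟨b, a, Or.inl hab, by simp [ha, hb]⟩
      · rw [if_neg hex]; simp
  · rintro ⟨sig', ⟨hmem', hedge'⟩, hnorm⟩
    refine ⟨fun e => match sig' (Sum.inl e), sig' (Sum.inr e) with
      | Interaction.res, Interaction.set => Interaction.inp
      | Interaction.set, Interaction.res => Interaction.out
      | _, _ => Interaction.nop, ?_, ?_⟩
    · intro e
      cases h1 : sig' (Sum.inl e) <;> cases h2 : sig' (Sum.inr e) <;> simp [h1, h2]
    · intro s e s' h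
      have hA := hedge' s (Sum.inl e) s' (Or.inl h)
      have hB := hedge' s' (Sum.inl e) s' (Or.inr ⟨rfl, s, h⟩)
      have hC := hedge' s' (Sum.inr e) s (Or.inl h)
      have hD := hedge' s (Sum.inr e) s (Or.inr ⟨rfl, s', h⟩)
      clear hmem' hedge' hnorm hinit hdet hlf h hτ
      cases h1 : sig' (Sum.inl e) <;> cases h2 : sig' (Sum.inr e) <;>
        simp only [h1, h2] at hA hB hC hD ⊢ <;>
        cases hs : sup s <;> cases hs' : sup s' <;>
        simp_all [Interaction.eval]
end

section
/- Let τ1={nop,inp} and τ={nop,res,swap} ∪ ω with ω ⊆ {inp,used,free}. Let A be a loop-free initialized transition system, C its oneway loop-extension, and sup: S_A → {0,1}. Then sup allows a τ1-region (sup,sig) of A if and only if sup allows a normalized τ-region (sup,sig') of C. -/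
/-- for `τ₁ = {nop,inp}` and `τ = {nop,res,swap} ∪ ω` with
`ω ⊆ {inp,used,free}`, a support `sup` of a loop-free initialized TS `A`
allows a `τ₁`-region of `A` iff it allows a normalized `τ`-region of the
oneway loop-extension `C` of `A`. -/
theorem oneway_loop_extension_region
    {S E : Type} [Finite S] [Finite E]
    (edge : S → E → S → Prop) (hdet : Deterministic edge)
    (ι : S) (hinit : Initialized edge ι) (hlf : LoopFree edge)
    (ω : Set Interaction)
    (hω : ω ⊆ {Interaction.inp, Interaction.used, Interaction.free})
    (sup : S → Bool) :
    (∃ sig : E → Interaction,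
        IsRegion edge {Interaction.nop, Interaction.inp} sup sig) ↔
      ∃ sig' : E ⊕ E → Interaction,
        IsRegion (onewayLoopExt edge)
          ({Interaction.nop, Interaction.res, Interaction.swap} ∪ ω) sup sig' ∧
          Normalized (onewayLoopExt edge) sup sig' := by
  classical
  constructor
  · rintro ⟨sig, hmem, hev⟩
    -- every event's signature is nop or inp
    have hni : ∀ e, sig e = Interaction.nop ∨ sig e = Interaction.inp := by
      intro e
      have := hmem e
      simpa [Set.mem_insert_iff] using this
    -- edges behave according to signatures
    have hnop : ∀ e, sig e = Interaction.nop → ∀ s s', edge s e s' → sup s = sup s' := by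
      intro e he s s' h
      have := hev s e s' h
      rw [he] at this
      simpa [Interaction.eval] using this
    have hinp : ∀ e, sig e = Interaction.inp → ∀ s s', edge s e s' →
        sup s = true ∧ sup s' = false := by
      intro e he s s' h
      have := hev s e s' h
      rw [he] at this
      cases hs : sup s <;> rw [hs] at this <;> simp [Interaction.eval] at this
      · exact ⟨rfl, this⟩
    refine ⟨fun f => Sum.elim
        (fun e => if sig e = Interaction.inp ∧ ∃ s s', edge s e s'
          then Interaction.res else Interaction.nop)
        (fun e => if sig e = Interaction.inp ∧ ∃ s s', edge s e s'
          then Interaction.swap else Interaction.nop) f, ⟨?_, ?_⟩, ?_⟩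
    · rintro (e | e) <;> dsimp <;> split <;>
        simp [Set.mem_union, Set.mem_insert_iff]
    · rintro s (e | e) s' hed
      · dsimp
        rcases hed with hed | ⟨rfl, q, hq⟩
        · split
          · rename_i hc
            have := hinp e hc.1 s s' hed
            simp [Interaction.eval, this.2]
          · rename_i hc
            have he : sig e = Interaction.nop := by
              rcases hni e with h | h
              · exact h
              · exact absurd ⟨h, s, s', hed⟩ hc
            have := hnop e he s s' hed
            simp [Interaction.eval, this]
        · split
          · rename_i hc
            have := hinp e hc.1 q s hq
            simp [Interaction.eval, this.2]
          · simp [Interaction.eval]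
      · -- hed : edge s' e s
        dsimp
        change edge s' e s at hed
        split
        · rename_i hc
          have := hinp e hc.1 s' s hed
          simp [Interaction.eval, this.1, this.2]
        · rename_i hc
          have he : sig e = Interaction.nop := by
            rcases hni e with h | h
            · exact h
            · exact absurd ⟨h, s', s, hed⟩ hc
          have := hnop e he s' s hed
          simp [Interaction.eval, this]
    · -- Normalized
      rintro (e | e) <;> dsimp <;> constructor
      · split <;> simp
      · split
        · rename_i hc
          intro _
          obtain ⟨s, s', hed⟩ := hc.2
          have h2 := hinp e hc.1 s s' hed
          exact ⟨s, s', Or.inl hed, by simp [h2.1, h2.2]⟩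
        · intro h
          simp at h
      · split <;> simp
      · split
        · rename_i hc
          intro _
          obtain ⟨s, s', hed⟩ := hc.2
          have h2 := hinp e hc.1 s s' hed
          exact ⟨s', s, hed, by simp [h2.1, h2.2]⟩
        · intro h
          simp at h
  · rintro ⟨sig', ⟨hmem, hev⟩, hnorm⟩
    -- each signature is nop, res, swap or inp
    have hcases : ∀ f, sig' f = Interaction.nop ∨ sig' f = Interaction.res ∨
        sig' f = Interaction.swap ∨ sig' f = Interaction.inp := by
      intro f
      have h1 := hmem f
      have h2 := (hnorm f).1
      rcases h1 with h | h
      · simp [Set.mem_insert_iff] at h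
        tauto
      · have := hω h
        simp [Set.mem_insert_iff] at this
        rcases this with h | h | h
      -- used/free excluded
        · tauto
        · exact absurd h h2.1
        · exact absurd h h2.2
    -- if the loop at a state with support true exists, inl signature is nop
    have hLtrue : ∀ e s', (∃ q, edge q e s') → sup s' = true →
        sig' (Sum.inl e) = Interaction.nop := by
      intro e s' hq hs
      have hL : (sig' (Sum.inl e)).eval (sup s') = some (sup s') :=
        hev s' (Sum.inl e) s' (Or.inr ⟨rfl, hq⟩)
      rcases hcases (Sum.inl e) with h | h | h | h
      · exact h
      all_goals rw [h, hs] at hL; simp [Interaction.eval] at hL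
    refine ⟨fun e => if sig' (Sum.inr e) = Interaction.nop
      then Interaction.nop else Interaction.inp, ?_, ?_⟩
    · intro e
      dsimp only
      split <;> simp [Set.mem_insert_iff]
    · intro s e s' hed
      show (if sig' (Sum.inr e) = Interaction.nop then Interaction.nop
        else Interaction.inp).eval (sup s) = some (sup s')
      have hA : (sig' (Sum.inl e)).eval (sup s) = some (sup s') :=
        hev s (Sum.inl e) s' (Or.inl hed)
      have hB : (sig' (Sum.inr e)).eval (sup s') = some (sup s) :=
        hev s' (Sum.inr e) s hed
      rcases hcases (Sum.inr e) with h | h | h | h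
      · -- nop : support preserved
        rw [h] at hB
        rw [if_pos h]
        simp [Interaction.eval] at hB ⊢
        exact hB.symm
      · -- res : contradiction via normalization
        exfalso
        have hch := (hnorm (Sum.inr e)).2 (by tauto)
        obtain ⟨t, t', hedC, hne⟩ := hch
        change edge t' e t at hedC
        have hBt : (sig' (Sum.inr e)).eval (sup t) = some (sup t') :=
          hev t (Sum.inr e) t' hedC
        rw [h] at hBt
        have ht' : sup t' = false := by
          cases hst : sup t <;> rw [hst] at hBt <;>
            simpa [Interaction.eval] using hBt.symm
        have ht : sup t = true := by
          cases hst : sup t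
          · rw [hst, ht'] at hne; exact (hne rfl).elim
          · rfl
        have hn := hLtrue e t ⟨t', hedC⟩ ht
        have hAt : (sig' (Sum.inl e)).eval (sup t') = some (sup t) :=
          hev t' (Sum.inl e) t (Or.inl hedC)
        rw [hn] at hAt
        simp [Interaction.eval] at hAt
        exact hne hAt.symm
      · -- swap
        rw [h] at hB
        have hB' : sup s = !sup s' := by
          cases hst : sup s' <;> rw [hst] at hB <;>
            simpa [Interaction.eval] using hB.symm
        cases hst : sup s'
        · rw [hst] at hB'
          have hne : sig' (Sum.inr e) ≠ Interaction.nop := by rw [h]; simp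
          rw [if_neg hne]
          simp [Interaction.eval, hB']
        · exfalso
          have hn := hLtrue e s' ⟨s, hed⟩ hst
          rw [hn] at hA
          simp [Interaction.eval] at hA
          rw [hst] at hB'
          rw [hA, hst] at hB'
          simp at hB'
      · -- inp : contradiction
        exfalso
        rw [h] at hB
        have hs' : sup s' = true := by
          cases hst : sup s'
          · rw [hst] at hB; simp [Interaction.eval] at hB
          · rfl
        have hs : sup s = false := by
          rw [hs'] at hB
          simpa [Interaction.eval] using hB.symm
        have hn := hLtrue e s' ⟨s, hed⟩ hs'
        rw [hn] at hA
        simp [Interaction.eval] at hA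
        rw [hs, hs'] at hA
        exact Bool.false_ne_true hA
end

section
/- Let τ0={nop,inp,out} and τ={nop,out,res} ∪ ω with ω ⊆ {inp,used,free}. A loop-free initialized transition system A has the τ0-SSP if and only if its backward-extension B has the τ-SSP. -/
/-- Auxiliary: forward signature for events of `B` built from a `τ₀`-region. -/
def fwdSig : Interaction → Interaction
  | .nop => .nop
  | .inp => .res
  | .out => .out
  | _ => .nop

/-- Auxiliary: backward signature for fresh events of `B`. -/
def bwdSig : Interaction → Interaction
  | .nop => .nop
  | .inp => .out
  | .out => .res
  | _ => .nop

lemma fwdSig_mem (i : Interaction) :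
    fwdSig i ∈ ({Interaction.nop, Interaction.out, Interaction.res} : Set Interaction) := by
  cases i <;> simp [fwdSig]

lemma bwdSig_mem (i : Interaction) :
    bwdSig i ∈ ({Interaction.nop, Interaction.out, Interaction.res} : Set Interaction) := by
  cases i <;> simp [bwdSig]

/-- Trichotomy for an event of the backward extension under a `τ`-region. -/
lemma trich_aux {S E : Type} (edge : S → E → S → Prop)
    (sup : S → Bool) (sig : E ⊕ E → Interaction)
    (hreg : ∀ s e s', backwardExt edge s e s' → (sig e).eval (sup s) = some (sup s'))
    (e : E)
    (hmem : sig (Sum.inl e) ≠ Interaction.set ∧ sig (Sum.inl e) ≠ Interaction.swap) :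
    (∀ p p', edge p e p' → sup p = sup p') ∨
      (∀ p p', edge p e p' → sup p = true ∧ sup p' = false) ∨
      (∀ p p', edge p e p' → sup p = false ∧ sup p' = true) := by
  classical
  have hfwd : ∀ p p', edge p e p' →
      (sig (Sum.inl e)).eval (sup p) = some (sup p') := fun p p' h =>
    hreg p (Sum.inl e) p' h
  have hbwd : ∀ p p', edge p e p' →
      (sig (Sum.inr e)).eval (sup p') = some (sup p) := fun p p' h =>
    hreg p' (Sum.inr e) p h
  cases hsl : sig (Sum.inl e) with
  | nop =>
      left; intro p p' h
      have := hfwd p p' h; rw [hsl] at this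
      simpa [Interaction.eval] using this
  | inp =>
      right; left; intro p p' h
      have := hfwd p p' h; rw [hsl] at this
      cases hp : sup p <;> rw [hp] at this <;>
        simp [Interaction.eval] at this <;> simp [this]
  | out =>
      right; right; intro p p' h
      have := hfwd p p' h; rw [hsl] at this
      cases hp : sup p <;> rw [hp] at this <;>
        simp [Interaction.eval] at this <;> simp [this]
  | res =>
      have hzero : ∀ p p', edge p e p' → sup p' = false := by
        intro p p' h
        have := hfwd p p' h; rw [hsl] at this
        simp [Interaction.eval] at this; exact this
      by_cases hex : ∃ p p', edge p e p' ∧ sup p = true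
      · obtain ⟨q, q', hq, hqt⟩ := hex
        have hval : (sig (Sum.inr e)).eval false = some true := by
          have := hbwd q q' hq
          rw [hzero q q' hq, hqt] at this; exact this
        right; left; intro p p' h
        have h1 := hbwd p p' h
        rw [hzero p p' h, hval] at h1
        exact ⟨(Option.some_injective _ h1).symm, hzero p p' h⟩
      · push_neg at hex
        left; intro p p' h
        have h1 : sup p = false := by
          cases hp : sup p
          · rfl
          · exact absurd hp (hex p p' h)
        rw [h1, hzero p p' h]
  | set => exact (hmem.1 hsl).elim
  | swap => exact (hmem.2 hsl).elim
  | used =>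
      left; intro p p' h
      have := hfwd p p' h; rw [hsl] at this
      cases hp : sup p <;> rw [hp] at this <;>
        simp [Interaction.eval] at this <;> simp [this]
  | free =>
      left; intro p p' h
      have := hfwd p p' h; rw [hsl] at this
      cases hp : sup p <;> rw [hp] at this <;>
        simp [Interaction.eval] at this <;> simp [this]


/-- for `τ₀ = {nop,inp,out}` and `τ = {nop,out,res} ∪ ω` with
`ω ⊆ {inp,used,free}`, a loop-free initialized TS `A` has the `τ₀`-SSP iff its
backward-extension `B` has the `τ`-SSP. -/

theorem backward_extension_ssp
    {S E : Type} [Finite S] [Finite E]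
    (edge : S → E → S → Prop) (hdet : Deterministic edge)
    (ι : S) (hinit : Initialized edge ι) (hlf : LoopFree edge)
    (ω : Set Interaction)
    (hω : ω ⊆ {Interaction.inp, Interaction.used, Interaction.free}) :
    HasSSP edge {Interaction.nop, Interaction.inp, Interaction.out} ↔
      HasSSP (backwardExt edge)
        ({Interaction.nop, Interaction.out, Interaction.res} ∪ ω) := by
  classical
  constructor
  · -- forward direction
    intro hA s s' hne
    obtain ⟨sup, sig, ⟨hmem, hreg⟩, hsep⟩ := hA s s' hne
    refine ⟨sup, fun ee => Sum.elim (fun e => fwdSig (sig e)) (fun e => bwdSig (sig e)) ee,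
      ⟨?_, ?_⟩, hsep⟩
    · rintro (e | e)
      · exact Or.inl (fwdSig_mem (sig e))
      · exact Or.inl (bwdSig_mem (sig e))
    · rintro p (e | e) p' hp
      · -- forward edge: `edge p e p'`
        have h := hreg p e p' hp
        have hm := hmem e
        simp only [Set.mem_insert_iff, Set.mem_singleton_iff] at hm
        rcases hm with hm | hm | hm <;> rw [hm] at h <;>
          cases hq : sup p <;> rw [hq] at h <;>
          simp [Interaction.eval] at h <;>
          simp [fwdSig, hm, hq, Interaction.eval, h]
      · -- backward edge: `edge p' e p`
        have h := hreg p' e p hp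
        have hm := hmem e
        simp only [Set.mem_insert_iff, Set.mem_singleton_iff] at hm
        rcases hm with hm | hm | hm <;> rw [hm] at h <;>
          cases hq : sup p' <;> rw [hq] at h <;>
          simp [Interaction.eval] at h <;>
          simp [bwdSig, hm, hq, Interaction.eval, h]
  · -- backward direction
    intro hB s s' hne
    obtain ⟨sup, sig, ⟨hmem, hreg⟩, hsep⟩ := hB s s' hne
    have hnoset : ∀ e : E, sig (Sum.inl e) ≠ Interaction.set ∧
        sig (Sum.inl e) ≠ Interaction.swap := by
      intro e
      have := hmem (Sum.inl e)
      rcases this with h | h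
      · simp only [Set.mem_insert_iff, Set.mem_singleton_iff] at h
        rcases h with h | h | h <;> rw [h] <;> exact ⟨by simp, by simp⟩
      · have := hω h
        simp only [Set.mem_insert_iff, Set.mem_singleton_iff] at this
        rcases this with h' | h' | h' <;> rw [h'] <;> exact ⟨by simp, by simp⟩
    have htri := trich_aux edge sup sig hreg
    refine ⟨sup, fun e =>
      if ∃ p p', edge p e p' ∧ sup p = true ∧ sup p' = false then Interaction.inp
      else if ∃ p p', edge p e p' ∧ sup p = false ∧ sup p' = true then Interaction.out
      else Interaction.nop, ⟨?_, ?_⟩, hsep⟩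
    · intro e
      dsimp only
      split
      · simp
      · split <;> simp
    · intro p e p' hp
      rcases htri e (hnoset e) with hc | hc | hc
      · have h1 : ¬ ∃ q q', edge q e q' ∧ sup q = true ∧ sup q' = false := by
          rintro ⟨q, q', hq, ht, hf⟩
          rw [hc q q' hq, hf] at ht; simp at ht
        have h2 : ¬ ∃ q q', edge q e q' ∧ sup q = false ∧ sup q' = true := by
          rintro ⟨q, q', hq, ht, hf⟩
          rw [hc q q' hq, hf] at ht; simp at ht
        simp only [h1, h2, if_false, if_neg]
        simp [Interaction.eval, hc p p' hp]
      · have h1 : ∃ q q', edge q e q' ∧ sup q = true ∧ sup q' = false :=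
          ⟨p, p', hp, (hc p p' hp).1, (hc p p' hp).2⟩
        simp only [h1, if_true, if_pos]
        simp [Interaction.eval, (hc p p' hp).1, (hc p p' hp).2]
      · have h1 : ¬ ∃ q q', edge q e q' ∧ sup q = true ∧ sup q' = false := by
          rintro ⟨q, q', hq, ht, hf⟩
          have := (hc q q' hq).1; rw [this] at ht; simp at ht
        have h2 : ∃ q q', edge q e q' ∧ sup q = false ∧ sup q' = true :=
          ⟨p, p', hp, (hc p p' hp).1, (hc p p' hp).2⟩
        simp only [h1, h2, if_false, if_true, if_neg, if_pos]
        simp [Interaction.eval, (hc p p' hp).1, (hc p p' hp).2]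
end

section
/- Let τ0={nop,inp,out} and let τ be a Boolean type of net with {nop,res,set} ⊆ τ. A loop-free initialized transition system A has the τ0-SSP if and only if its loop-extension D has the τ-SSP. -/
/-!
A `{nop,inp,out}`-region of `A` turns into a region of `D` with the same support by replacing
`e ↦ inp` with `e ↦ res, ē ↦ set` and `e ↦ out` with `e ↦ set, ē ↦ res`; the new loops are then
harmless. Conversely, in a region of `D` an event `e` with an edge `p' →e q'` that changes the
support carries the loops `q' →e q'` and `p' →ē p'`, so `e` maps both values to `sup q'` and `ē`
both to `sup p'`. Hence every `e`-edge of `A` changes the support in the same way, and the support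
is already that of a `{nop,inp,out}`-region of `A`.
-/

namespace Interaction

def loopFwd : Interaction → Interaction
  | .inp => .res
  | .out => .set
  | _ => .nop

def loopBwd : Interaction → Interaction
  | .inp => .set
  | .out => .res
  | _ => .nop

def ofPair : Bool → Bool → Interaction
  | true, false => .inp
  | false, true => .out
  | _, _ => .nop

theorem loopFwd_mem (i : Interaction) : loopFwd i ∈ ({nop, res, set} : Set Interaction) := by
  cases i <;> simp [loopFwd]

theorem loopBwd_mem (i : Interaction) : loopBwd i ∈ ({nop, res, set} : Set Interaction) := by
  cases i <;> simp [loopBwd]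

theorem ofPair_mem (a b : Bool) : ofPair a b ∈ ({nop, inp, out} : Set Interaction) := by
  cases a <;> cases b <;> simp [ofPair]

theorem eval_ofPair (a b : Bool) : (ofPair a b).eval a = some b := by
  cases a <;> cases b <;> rfl

theorem eval_loopFwd {i : Interaction} (hi : i ∈ ({nop, inp, out} : Set Interaction))
    {a b : Bool} (h : i.eval a = some b) :
    (loopFwd i).eval a = some b ∧ (loopFwd i).eval b = some b := by
  simp only [Set.mem_insert_iff, Set.mem_singleton_iff] at hi
  rcases hi with rfl | rfl | rfl <;> cases a <;> cases b <;> simp_all [eval, loopFwd]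

theorem eval_loopBwd {i : Interaction} (hi : i ∈ ({nop, inp, out} : Set Interaction))
    {a b : Bool} (h : i.eval a = some b) :
    (loopBwd i).eval b = some a ∧ (loopBwd i).eval a = some a := by
  simp only [Set.mem_insert_iff, Set.mem_singleton_iff] at hi
  rcases hi with rfl | rfl | rfl <;> cases a <;> cases b <;> simp_all [eval, loopBwd]

theorem eq_of_eval_of_eval_self {i : Interaction} {a b x y : Bool} (hab : i.eval a = some b)
    (hb : i.eval b = some b) (hne : a ≠ b) (hxy : i.eval x = some y) : y = b := by
  cases i <;> cases a <;> cases b <;> cases x <;> cases y <;> simp_all [eval]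

end Interaction

open Interaction

section Regions

variable {S E : Type} {edge : S → E → S → Prop} {sup : S → Bool}

def ChangesUniformly (edge : S → E → S → Prop) (sup : S → Bool) : Prop :=
  ∀ p e q p' q', edge p e q → edge p' e q' → sup p' ≠ sup q' → sup p = sup p' ∧ sup q = sup q'

theorem IsRegion.toLoopExt {τ : Set Interaction} (hτ : {nop, res, set} ⊆ τ) {sig : E → Interaction}
    (h : IsRegion edge {nop, inp, out} sup sig) :
    IsRegion (loopExt edge) τ sup (Sum.elim (loopFwd ∘ sig) (loopBwd ∘ sig)) := by
  obtain ⟨hmem, hedge⟩ := h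
  refine ⟨fun e => hτ ?_, ?_⟩
  · cases e with
    | inl e => exact loopFwd_mem (sig e)
    | inr e => exact loopBwd_mem (sig e)
  · rintro p (e | e) q (hpq | ⟨rfl, r, hr⟩)
    · exact (eval_loopFwd (hmem e) (hedge p e q hpq)).1
    · exact (eval_loopFwd (hmem e) (hedge r e p hr)).2
    · exact (eval_loopBwd (hmem e) (hedge q e p hpq)).1
    · exact (eval_loopBwd (hmem e) (hedge p e r hr)).2

theorem IsRegion.changesUniformly_of_loopExt {τ : Set Interaction} {sig : E ⊕ E → Interaction}
    (h : IsRegion (loopExt edge) τ sup sig) : ChangesUniformly edge sup := by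
  intro p e q p' q' hpq hpq' hne
  obtain ⟨-, hreg⟩ := h
  refine ⟨?_, ?_⟩
  · exact eq_of_eval_of_eval_self (hreg q' (.inr e) p' (.inl hpq'))
      (hreg p' (.inr e) p' (.inr ⟨rfl, q', hpq'⟩)) hne.symm (hreg q (.inr e) p (.inl hpq))
  · exact eq_of_eval_of_eval_self (hreg p' (.inl e) q' (.inl hpq'))
      (hreg q' (.inl e) q' (.inr ⟨rfl, p', hpq'⟩)) hne (hreg p (.inl e) q (.inl hpq))

theorem ChangesUniformly.exists_isRegion (h : ChangesUniformly edge sup) :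
    ∃ sig, IsRegion edge {nop, inp, out} sup sig := by
  have hevent : ∀ e, ∃ i ∈ ({nop, inp, out} : Set Interaction),
      ∀ p q, edge p e q → i.eval (sup p) = some (sup q) := by
    intro e
    by_cases hchange : ∃ p' q', edge p' e q' ∧ sup p' ≠ sup q'
    · obtain ⟨p', q', hpq', hne⟩ := hchange
      refine ⟨ofPair (sup p') (sup q'), ofPair_mem _ _, fun p q hpq => ?_⟩
      obtain ⟨hp, hq⟩ := h p e q p' q' hpq hpq' hne
      rw [hp, hq, eval_ofPair]
    · push Not at hchange
      exact ⟨nop, by simp, fun p q hpq => by simp [eval, hchange p q hpq]⟩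
  choose sig hsig using hevent
  exact ⟨sig, fun e => (hsig e).1, fun p e q hpq => (hsig e).2 p q hpq⟩

end Regions

theorem loop_extension_ssp_general
    {S E : Type}
    (edge : S → E → S → Prop)
    (τ : Set Interaction)
    (hτ : {Interaction.nop, Interaction.res, Interaction.set} ⊆ τ) :
    HasSSP edge {Interaction.nop, Interaction.inp, Interaction.out} ↔
      HasSSP (loopExt edge) τ := by
  constructor
  · intro h s s' hne
    obtain ⟨sup, sig, hreg, hsep⟩ := h s s' hne
    exact ⟨sup, _, IsRegion.toLoopExt hτ hreg, hsep⟩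
  · intro h s s' hne
    obtain ⟨sup, sig, hreg, hsep⟩ := h s s' hne
    obtain ⟨sig', hreg'⟩ := (IsRegion.changesUniformly_of_loopExt hreg).exists_isRegion
    exact ⟨sup, sig', hreg', hsep⟩

/-- for `τ₀ = {nop,inp,out}` and any Boolean type of nets `τ` with
`{nop,res,set} ⊆ τ`, a loop-free initialized TS `A` has the `τ₀`-SSP iff its
loop-extension `D` has the `τ`-SSP. -/
theorem loop_extension_ssp
    {S E : Type} [Finite S] [Finite E]
    (edge : S → E → S → Prop) (hdet : Deterministic edge)
    (ι : S) (hinit : Initialized edge ι) (hlf : LoopFree edge)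
    (τ : Set Interaction)
    (hτ : {Interaction.nop, Interaction.res, Interaction.set} ⊆ τ) :
    HasSSP edge {Interaction.nop, Interaction.inp, Interaction.out} ↔
      HasSSP (loopExt edge) τ :=
  loop_extension_ssp_general edge τ hτ
end

section
/- Let τ1={nop,inp} and τ={nop,res,swap} ∪ ω with ω ⊆ {inp,used,free}. A loop-free initialized transition system A has the τ1-SSP if and only if its oneway loop-extension C has the τ-SSP. -/
/-! Both directions keep the support of a region and change only the signatures. A
`{nop,inp}`-region of `A` becomes a region of `C` by reading `inp` as `res` on `e` (which also
fixes the target `0` of the loop) and as `swap` on `ē`. Conversely, in a region of `C` whose type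
has neither `set` nor `out`, an event `e` that changes the support somewhere must be `res` or
`inp`, because it also fixes the target of its loop; so `ē` takes `0` to `1`, hence is `swap`,
and every `e`-edge of `A` goes from `1` to `0`. Such `e` may be read as `inp`, all others as `nop`. -/

namespace Interaction

theorem eq_res_or_inp_of_eval_ne_of_eval_self {i : Interaction} (hset : i ≠ set) (hout : i ≠ out)
    {x y : Bool} (hxy : i.eval x = some y) (hne : x ≠ y) (hy : i.eval y = some y) :
    i = res ∨ i = inp := by
  cases i <;> cases x <;> cases y <;> simp_all [eval]

theorem eq_swap_of_eval_false {i : Interaction} (hset : i ≠ set) (hout : i ≠ out)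
    (h : i.eval false = some true) : i = swap := by
  cases i <;> simp_all [eval]

theorem eval_eq_false_of_eq_res_or_inp {i : Interaction} (hi : i = res ∨ i = inp) {x y : Bool}
    (h : i.eval x = some y) : y = false := by
  rcases hi with rfl | rfl <;> cases x <;> simp_all [eval]

theorem eval_res_swap_of_nop_or_inp {i : Interaction} (hi : i = nop ∨ i = inp) {x y : Bool}
    (h : i.eval x = some y) :
    (if i = inp then res else nop).eval x = some y ∧
      (if i = inp then res else nop).eval y = some y ∧
      (if i = inp then swap else nop).eval y = some x := by
  rcases hi with rfl | rfl <;> cases x <;> cases y <;> simp_all [eval]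

end Interaction

open Interaction

section Regions

variable {S E : Type} {edge : S → E → S → Prop}

theorem HasSSP.of_forall_isRegion {E' : Type} {edge' : S → E' → S → Prop}
    {τ τ' : Set Interaction}
    (h : ∀ sup sig, IsRegion edge τ sup sig → ∃ sig', IsRegion edge' τ' sup sig')
    (hA : HasSSP edge τ) : HasSSP edge' τ' := by
  intro s s' hne
  obtain ⟨sup, sig, hR, hsep⟩ := hA s s' hne
  obtain ⟨sig', hR'⟩ := h sup sig hR
  exact ⟨sup, sig', hR', hsep⟩

theorem IsRegion.mono {τ τ' : Set Interaction} {sup : S → Bool} {sig : E → Interaction}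
    (hR : IsRegion edge τ sup sig) (hτ : τ ⊆ τ') : IsRegion edge τ' sup sig :=
  ⟨fun e => hτ (hR.1 e), hR.2⟩

theorem IsRegion.toOnewayLoopExt {sup : S → Bool} {sig : E → Interaction}
    (hR : IsRegion edge {nop, inp} sup sig) :
    IsRegion (onewayLoopExt edge) {nop, res, swap} sup
      (Sum.elim (fun e => if sig e = inp then res else nop)
        (fun e => if sig e = inp then swap else nop)) := by
  have hsig : ∀ e, sig e = nop ∨ sig e = inp := hR.1
  refine ⟨by rintro (e | e) <;> dsimp only [Sum.elim] <;> split_ifs <;> simp, ?_⟩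
  rintro s (e | e) s' h
  · rcases h with h | ⟨rfl, q, hq⟩
    · exact (eval_res_swap_of_nop_or_inp (hsig e) (hR.2 s e s' h)).1
    · exact (eval_res_swap_of_nop_or_inp (hsig e) (hR.2 q e s hq)).2.1
  · exact (eval_res_swap_of_nop_or_inp (hsig e) (hR.2 s' e s h)).2.2

theorem IsRegion.onewayLoopExt_support_of_ne {τ : Set Interaction} (hset : set ∉ τ)
    (hout : out ∉ τ) {sup : S → Bool} {sig : E ⊕ E → Interaction}
    (hR : IsRegion (onewayLoopExt edge) τ sup sig) {t t' : S} {e : E} (htt : edge t e t')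
    (hne : sup t ≠ sup t') {p q : S} (hpq : edge p e q) : sup p = true ∧ sup q = false := by
  obtain ⟨hmem, hC⟩ := hR
  have hmem_ne : ∀ {a b}, a ∉ τ → sig b ≠ a := fun ha hb => ha (hb ▸ hmem _)
  have hres_inp : sig (.inl e) = res ∨ sig (.inl e) = inp :=
    eq_res_or_inp_of_eval_ne_of_eval_self (hmem_ne hset) (hmem_ne hout)
      (hC _ _ _ (Or.inl htt)) hne (hC _ _ _ (Or.inr ⟨rfl, t, htt⟩))
  have hq : sup q = false := eval_eq_false_of_eq_res_or_inp hres_inp (hC _ _ _ (Or.inl hpq))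
  have ht' : sup t' = false := eval_eq_false_of_eq_res_or_inp hres_inp (hC _ _ _ (Or.inl htt))
  have ht : sup t = true := by simpa [ht'] using hne
  have hswap : sig (.inr e) = swap :=
    eq_swap_of_eval_false (hmem_ne hset) (hmem_ne hout) (ht ▸ ht' ▸ hC t' (.inr e) t htt)
  have hp := hC q (.inr e) p hpq
  rw [hswap, hq] at hp
  exact ⟨(Option.some.inj hp).symm, hq⟩

open Classical in
theorem isRegion_nop_inp {sup : S → Bool}
    (h : ∀ {t t' e}, edge t e t' → sup t ≠ sup t' →
      ∀ {p q}, edge p e q → sup p = true ∧ sup q = false) :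
    IsRegion edge {nop, inp} sup
      (fun e => if ∃ p q, edge p e q ∧ sup p ≠ sup q then inp else nop) := by
  refine ⟨fun e => by dsimp only; split_ifs <;> simp, fun p e q hpq => ?_⟩
  dsimp only
  split_ifs with hchange
  · obtain ⟨t, t', htt, hne⟩ := hchange
    obtain ⟨hp, hq⟩ := h htt hne hpq
    simp [hp, hq, eval]
  · have : sup p = sup q := not_not.1 fun hne => hchange ⟨p, q, hpq, hne⟩
    simp [this, eval]

end Regions

theorem oneway_loop_extension_ssp_general
    {S E : Type}
    (edge : S → E → S → Prop)
    (ω : Set Interaction)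
    (hω : ω ⊆ {Interaction.inp, Interaction.used, Interaction.free}) :
    HasSSP edge {Interaction.nop, Interaction.inp} ↔
      HasSSP (onewayLoopExt edge)
        ({Interaction.nop, Interaction.res, Interaction.swap} ∪ ω) := by
  have hset : set ∉ {nop, res, swap} ∪ ω := fun h => by simpa using h.imp_right (@hω _)
  have hout : out ∉ {nop, res, swap} ∪ ω := fun h => by simpa using h.imp_right (@hω _)
  constructor
  · exact HasSSP.of_forall_isRegion fun _ _ hR =>
      ⟨_, (IsRegion.toOnewayLoopExt hR).mono Set.subset_union_left⟩
  · exact HasSSP.of_forall_isRegion fun _ _ hR =>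
      ⟨_, isRegion_nop_inp (IsRegion.onewayLoopExt_support_of_ne hset hout hR)⟩

/-- for `τ₁ = {nop,inp}` and `τ = {nop,res,swap} ∪ ω` with
`ω ⊆ {inp,used,free}`, a loop-free initialized TS `A` has the `τ₁`-SSP iff its
oneway loop-extension `C` has the `τ`-SSP. -/
theorem oneway_loop_extension_ssp
    {S E : Type} [Finite S] [Finite E]
    (edge : S → E → S → Prop) (hdet : Deterministic edge)
    (ι : S) (hinit : Initialized edge ι) (hlf : LoopFree edge)
    (ω : Set Interaction)
    (hω : ω ⊆ {Interaction.inp, Interaction.used, Interaction.free}) :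
    HasSSP edge {Interaction.nop, Interaction.inp} ↔
      HasSSP (onewayLoopExt edge)
        ({Interaction.nop, Interaction.res, Interaction.swap} ∪ ω) :=
  oneway_loop_extension_ssp_general edge ω hω
end

section
/- Let τ={swap} ∪ ω with ω ⊆ {inp,out}, and let A=(S,E,δ,ι) be an initialized transition system. If A has the τ-SSP, then A has at most two states. -/
/-- for `τ = {swap} ∪ ω` with `ω ⊆ {inp,out}`, if an initialized
TS `A` has the `τ`-SSP, then `A` has at most two states. -/
theorem swap_inp_out_ssp_at_most_two_states
    {S E : Type} [Finite S] [Finite E]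
    (edge : S → E → S → Prop) (hdet : Deterministic edge)
    (ι : S) (hinit : Initialized edge ι)
    (ω : Set Interaction) (hω : ω ⊆ {Interaction.inp, Interaction.out})
    (hssp : HasSSP edge ({Interaction.swap} ∪ ω)) :
    ∀ x y z : S, x = y ∨ x = z ∨ y = z := by
  -- every edge flips the support of any region
  have flip : ∀ sup sig, IsRegion edge ({Interaction.swap} ∪ ω) sup sig →
      ∀ s e s', edge s e s' → sup s' = !(sup s) := by
    intro sup sig hreg s e s' he
    have h1 := hreg.2 s e s' he
    have hmem := hreg.1 e
    have : sig e = Interaction.swap ∨ sig e = Interaction.inp ∨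
        sig e = Interaction.out := by
      rcases hmem with h | h
      · left; exact h
      · rcases hω h with h' | h'
        · right; left; exact h'
        · right; right; exact h'
    rcases this with h | h | h <;> rw [h] at h1 <;>
      cases hs : sup s <;> rw [hs] at h1 <;>
      simp [Interaction.eval] at h1 <;> simp [h1]
  -- each reachable state has a parity determining its support in all regions
  have key : ∀ s, Reachable edge ι s → ∃ b : Bool, ∀ sup sig,
      IsRegion edge ({Interaction.swap} ∪ ω) sup sig → sup s = xor b (sup ι) := by
    intro s hr
    induction hr with
    | refl => exact ⟨false, fun sup sig _ => by simp⟩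
    | tail h he ih =>
      obtain ⟨b, hb⟩ := ih
      refine ⟨!b, fun sup sig hreg => ?_⟩
      rw [flip sup sig hreg _ _ _ he, hb sup sig hreg]
      cases b <;> cases sup ι <;> rfl
  have hpar : ∀ x : S, ∃ b : Bool, ∀ sup sig,
      IsRegion edge ({Interaction.swap} ∪ ω) sup sig → sup x = xor b (sup ι) :=
    fun x => key x (hinit x)
  have samepar : ∀ (a b : S) (ba bb : Bool),
      (∀ sup sig, IsRegion edge ({Interaction.swap} ∪ ω) sup sig → sup a = xor ba (sup ι)) →
      (∀ sup sig, IsRegion edge ({Interaction.swap} ∪ ω) sup sig → sup b = xor bb (sup ι)) →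
      ba = bb → a = b := by
    intro a b ba bb ha hb hab
    by_contra hne
    obtain ⟨sup, sig, hreg, hsep⟩ := hssp a b hne
    exact hsep (by rw [ha sup sig hreg, hb sup sig hreg, hab])
  intro x y z
  obtain ⟨bx, hx⟩ := hpar x
  obtain ⟨by', hy⟩ := hpar y
  obtain ⟨bz, hz⟩ := hpar z
  by_cases h1 : bx = by'
  · exact Or.inl (samepar x y bx by' hx hy h1)
  by_cases h2 : bx = bz
  · exact Or.inr (Or.inl (samepar x z bx bz hx hz h2))
  · refine Or.inr (Or.inr (samepar y z by' bz hy hz ?_))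
    cases bx <;> cases by' <;> cases bz <;>
      first
      | rfl
      | exact absurd rfl h1
      | exact absurd rfl h2
end

section
/- Let τ be a nop-free Boolean type of net (nop ∉ τ), A a bi-directed transition system, R=(sup,sig) a τ-region of A, and s →e s' an edge of A. If sig(e) ∈ save = {nop,set,used,res,free}, then sup(s)=sup(s')=sup(q)=sup(q') for every edge q →e q' of A. -/
/-- for a `nop`-free type `τ`, a bi-directed TS `A` and a
`τ`-region `(sup,sig)` of `A`, if `s →e s'` is an edge of `A` and
`sig e ∈ save`, then `sup s = sup s' = sup q = sup q'` for every edge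
`q →e q'` of `A`. -/
theorem save_signature_constant_support
    {S E : Type} [Finite S] [Finite E]
    (edge : S → E → S → Prop) (hdet : Deterministic edge) (hbi : BiDirected edge)
    (τ : Set Interaction) (hnf : Interaction.nop ∉ τ)
    (sup : S → Bool) (sig : E → Interaction) (hreg : IsRegion edge τ sup sig)
    (s : S) (e : E) (s' : S) (hedge : edge s e s') (hsave : sig e ∈ saveSet) :
    sup s = sup s' ∧ ∀ q q', edge q e q' → sup q = sup s ∧ sup q' = sup s := by
  obtain ⟨hτ, hR⟩ := hreg
  have hnop : sig e ≠ Interaction.nop := fun h => hnf (h ▸ hτ e)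
  have key : ∃ b, ∀ q q', edge q e q' → sup q = b ∧ sup q' = b := by
    simp only [saveSet, Set.mem_insert_iff, Set.mem_singleton_iff] at hsave
    rcases hsave with h | h | h | h | h
    · exact absurd h hnop
    · refine ⟨true, fun q q' hq => ?_⟩
      have hA := hR q e q' hq
      have hB := hR q' e q (hbi.2 _ _ _ hq)
      cases hx : sup q <;> cases hy : sup q' <;> simp_all [Interaction.eval]
    · refine ⟨true, fun q q' hq => ?_⟩
      have hA := hR q e q' hq
      have hB := hR q' e q (hbi.2 _ _ _ hq)
      cases hx : sup q <;> cases hy : sup q' <;> simp_all [Interaction.eval]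
    · refine ⟨false, fun q q' hq => ?_⟩
      have hA := hR q e q' hq
      have hB := hR q' e q (hbi.2 _ _ _ hq)
      cases hx : sup q <;> cases hy : sup q' <;> simp_all [Interaction.eval]
    · refine ⟨false, fun q q' hq => ?_⟩
      have hA := hR q e q' hq
      have hB := hR q' e q (hbi.2 _ _ _ hq)
      cases hx : sup q <;> cases hy : sup q' <;> simp_all [Interaction.eval]
  obtain ⟨b, hb⟩ := key
  obtain ⟨h1, h2⟩ := hb s s' hedge
  exact ⟨h1.trans h2.symm, fun q q' hq => by
    obtain ⟨h3, h4⟩ := hb q q' hq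
    exact ⟨h3.trans h1.symm, h4.trans h1.symm⟩⟩
end

section
/- Let τ be a nop-free Boolean type of net, A a bi-directed transition system, and R=(sup,sig) a τ-region of A. Let P0 = s0 ↔e1 s1 ↔e2 ... ↔em sm and P1 = q0 ↔e1 q1 ↔e2 ... ↔em qm be two simple bi-directed paths of A applying the same sequence of events e1,...,em. If sup(sm) ≠ sup(qm), then sig(ei) = swap for all i ∈ {1,...,m}. -/
/-- for a `nop`-free type `τ`, a bi-directed TS `A`, a `τ`-region
`(sup,sig)` of `A` and two simple bi-directed paths `P₀ = s₀ e₁ … e_m s_m` and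
`P₁ = q₀ e₁ … e_m q_m` applying the same event sequence, if
`sup s_m ≠ sup q_m`, then `sig eᵢ = swap` for all `i`. -/
theorem parallel_paths_all_swap
    {S E : Type} [Finite S] [Finite E]
    (edge : S → E → S → Prop) (hdet : Deterministic edge) (hbi : BiDirected edge)
    (τ : Set Interaction) (hnf : Interaction.nop ∉ τ)
    (sup : S → Bool) (sig : E → Interaction) (hreg : IsRegion edge τ sup sig)
    (m : ℕ) (s q : Fin (m + 1) → S) (e : Fin m → E)
    (hs : ∀ i : Fin m, edge (s i.castSucc) (e i) (s i.succ))
    (hq : ∀ i : Fin m, edge (q i.castSucc) (e i) (q i.succ))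
    (hsinj : Function.Injective s) (hqinj : Function.Injective q)
    (hdiff : sup (s (Fin.last m)) ≠ sup (q (Fin.last m))) :
    ∀ i : Fin m, sig (e i) = Interaction.swap := by
  have key : ∀ s₀ e₀ s₀', edge s₀ e₀ s₀' →
      (sig e₀ = Interaction.swap ∧ sup s₀' = !sup s₀) ∨
      (sig e₀ ≠ Interaction.swap ∧
        sup s₀' = decide (sig e₀ = Interaction.set ∨ sig e₀ = Interaction.used)) := by
    intro s₀ e₀ s₀' h
    have h1 := hreg.2 s₀ e₀ s₀' h
    have h2 := hreg.2 s₀' e₀ s₀ (hbi.2 s₀ e₀ s₀' h)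
    have hnn : sig e₀ ≠ Interaction.nop := fun hh => hnf (hh ▸ hreg.1 e₀)
    cases hσ : sig e₀ <;> rw [hσ] at h1 h2 hnn <;>
      cases hb : sup s₀ <;> cases hb' : sup s₀' <;> rw [hb, hb'] at h1 h2 <;>
      simp_all [Interaction.eval]
  by_contra hcon
  push_neg at hcon
  obtain ⟨j, hj⟩ := hcon
  have base : sup (s j.succ) = sup (q j.succ) := by
    rcases key _ _ _ (hs j) with ⟨h, _⟩ | ⟨_, h⟩
    · exact absurd h hj
    · rcases key _ _ _ (hq j) with ⟨h', _⟩ | ⟨_, h'⟩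
      · exact absurd h' hj
      · rw [h, h']
  have main : ∀ k, j.val + 1 ≤ k → ∀ hk : k ≤ m,
      sup (s ⟨k, Nat.lt_succ_of_le hk⟩) = sup (q ⟨k, Nat.lt_succ_of_le hk⟩) := by
    intro k hk
    induction k, hk using Nat.le_induction with
    | base =>
        intro hk
        have : (⟨j.val + 1, Nat.lt_succ_of_le hk⟩ : Fin (m + 1)) = j.succ := rfl
        rw [this]; exact base
    | succ k hk ih =>
        intro hk1
        have hkm : k < m := Nat.lt_of_succ_le hk1
        set i : Fin m := ⟨k, hkm⟩ with hi
        have hcs : (i.castSucc : Fin (m + 1)) = ⟨k, Nat.lt_succ_of_le hkm.le⟩ := rfl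
        have hsc : (i.succ : Fin (m + 1)) = ⟨k + 1, Nat.lt_succ_of_le hk1⟩ := rfl
        have ihk := ih hkm.le
        rcases key _ _ _ (hs i) with ⟨hσ, h⟩ | ⟨hσ, h⟩ <;>
        rcases key _ _ _ (hq i) with ⟨hσ', h'⟩ | ⟨hσ', h'⟩ <;>
          first
          | exact absurd hσ hσ'
          | exact absurd hσ' hσ
          | · rw [← hsc, h, h', hcs] at *
              rw [ihk]
          | · rw [← hsc, h, h']
  have := main m (Nat.succ_le_of_lt j.isLt) le_rfl
  exact hdiff this
end

section
/- Let τ be a nop-free Boolean type of net, A a bi-directed transition system, and R=(sup,sig) a τ-region of A. Let P0 = s0 ↔e1 s1 ↔e2 ... ↔em sm be a simple bi-directed path of A. If sup(s0) = sup(sm), then the number of indices i ∈ {1,...,m} with sig(ei) = swap is even. -/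
lemma tele {M : Type*} [AddCommGroup M] (m : ℕ) (g : Fin (m + 1) → M) :
    ∑ i : Fin m, (g i.succ - g i.castSucc) = g (Fin.last m) - g 0 := by
  induction m with
  | zero => simp
  | succ n ih =>
    rw [Fin.sum_univ_castSucc]
    have := ih (fun i => g i.castSucc)
    simp only [Fin.succ_castSucc] at this ⊢
    rw [this]
    simp [Fin.castSucc_zero, Fin.succ_last]

/-- for a `nop`-free type `τ`, a bi-directed TS `A`, a `τ`-region
`(sup,sig)` of `A` and a simple bi-directed path `P₀ = s₀ e₁ … e_m s_m`, if
`sup s₀ = sup s_m`, then the number of indices `i` with `sig eᵢ = swap` is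
even. -/
theorem closed_values_even_swaps
    {S E : Type} [Finite S] [Finite E]
    (edge : S → E → S → Prop) (hdet : Deterministic edge) (hbi : BiDirected edge)
    (τ : Set Interaction) (hnf : Interaction.nop ∉ τ)
    (sup : S → Bool) (sig : E → Interaction) (hreg : IsRegion edge τ sup sig)
    (m : ℕ) (s : Fin (m + 1) → S) (e : Fin m → E)
    (hs : ∀ i : Fin m, edge (s i.castSucc) (e i) (s i.succ))
    (hsinj : Function.Injective s)
    (hsame : sup (s 0) = sup (s (Fin.last m))) :
    Even (Finset.univ.filter fun i : Fin m => sig (e i) = Interaction.swap).card := by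
  classical
  set f : S → ZMod 2 := fun t => if sup t then 1 else 0 with hf
  have step : ∀ i : Fin m,
      (if sig (e i) = Interaction.swap then (1 : ZMod 2) else 0)
        = f (s i.succ) - f (s i.castSucc) := by
    intro i
    have h1 := hreg.2 _ _ _ (hs i)
    have h2 := hreg.2 _ _ _ (hbi.2 _ _ _ (hs i))
    cases hb1 : sup (s i.castSucc) <;> cases hb2 : sup (s i.succ) <;>
      cases hsig : sig (e i) <;>
      simp_all [Interaction.eval, f] <;> decide
  have hsum : ∑ i : Fin m, (if sig (e i) = Interaction.swap then (1 : ZMod 2) else 0)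
      = 0 := by
    calc ∑ i : Fin m, (if sig (e i) = Interaction.swap then (1 : ZMod 2) else 0)
        = ∑ i : Fin m, (f (s i.succ) - f (s i.castSucc)) :=
          Finset.sum_congr rfl fun i _ => step i
      _ = f (s (Fin.last m)) - f (s 0) := tele m (fun j => f (s j))
      _ = 0 := by simp only [f]; rw [← hsame, sub_self]
  have hcast : ((Finset.univ.filter fun i : Fin m =>
      sig (e i) = Interaction.swap).card : ZMod 2) = 0 := by
    rw [Finset.card_filter, Nat.cast_sum]
    simpa using hsum
  obtain ⟨k, hk⟩ := (ZMod.natCast_eq_zero_iff _ 2).mp hcast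
  exact ⟨k, by omega⟩
end

section
/- Let τ be a nop-free Boolean type of net and A a bi-directed transition system containing the bi-directed paths G = g0 ↔v g1 ↔w g2 ↔k0 g3 ↔k1 g4 and F = f0 ↔v f1 ↔w f2 ↔k1 f3 ↔k0 f4. If R=(sup,sig) is a τ-region of A such that either sig(k0) ∈ save and sig(k1) = swap, or sig(k0) = swap and sig(k1) ∈ save (where save = {nop,set,used,res,free}), then sig(v) = sig(w) = swap. -/
/-- On two bi-directed edges, a save-signature forces equal support values. -/
lemma save_eq {i : Interaction} {a a' b b' : Bool} (hi : i ∈ saveSet)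
    (hn : i ≠ Interaction.nop)
    (h1 : i.eval a = some a') (h2 : i.eval a' = some a)
    (h3 : i.eval b = some b') (h4 : i.eval b' = some b) : a = b := by
  cases i <;> cases a <;> cases b <;> simp_all [Interaction.eval, saveSet]

/-- On two bi-directed edges with differing targets, a non-nop signature must
be swap, and the sources differ too. -/
lemma step {i : Interaction} {a a' b b' : Bool} (hn : i ≠ Interaction.nop)
    (h1 : i.eval a = some a') (h2 : i.eval a' = some a)
    (h3 : i.eval b = some b') (h4 : i.eval b' = some b)
    (hne : a' ≠ b') : i = Interaction.swap ∧ a ≠ b := by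
  cases i <;> cases a <;> cases a' <;> cases b <;> cases b' <;>
    simp_all [Interaction.eval]

/-- for a `nop`-free type `τ` and a bi-directed TS `A` containing
the bi-directed paths `G = g₀ v g₁ w g₂ k₀ g₃ k₁ g₄` and
`F = f₀ v f₁ w f₂ k₁ f₃ k₀ f₄`, if `(sup,sig)` is a `τ`-region of `A` with
either `sig k₀ ∈ save` and `sig k₁ = swap`, or `sig k₀ = swap` and
`sig k₁ ∈ save`, then `sig v = sig w = swap`. -/
theorem gadget_k_signatures_force_vw_swap
    {S E : Type} [Finite S] [Finite E]
    (edge : S → E → S → Prop) (hdet : Deterministic edge) (hbi : BiDirected edge)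
    (τ : Set Interaction) (hnf : Interaction.nop ∉ τ)
    (sup : S → Bool) (sig : E → Interaction) (hreg : IsRegion edge τ sup sig)
    (g f : Fin 5 → S) (v w k0 k1 : E)
    (hg0 : edge (g 0) v (g 1)) (hg1 : edge (g 1) w (g 2))
    (hg2 : edge (g 2) k0 (g 3)) (hg3 : edge (g 3) k1 (g 4))
    (hf0 : edge (f 0) v (f 1)) (hf1 : edge (f 1) w (f 2))
    (hf2 : edge (f 2) k1 (f 3)) (hf3 : edge (f 3) k0 (f 4))
    (hginj : Function.Injective g) (hfinj : Function.Injective f)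
    (hev : ([v, w, k0, k1] : List E).Nodup)
    (hk : (sig k0 ∈ saveSet ∧ sig k1 = Interaction.swap) ∨
      (sig k0 = Interaction.swap ∧ sig k1 ∈ saveSet)) :
    sig v = Interaction.swap ∧ sig w = Interaction.swap := by
  have hn : ∀ e, sig e ≠ Interaction.nop := fun e h => hnf (h ▸ hreg.1 e)
  have H := hreg.2
  have Hb : ∀ s e s', edge s e s' → (sig e).eval (sup s') = some (sup s) :=
    fun s e s' h => H s' e s (hbi.2 s e s' h)
  have hne2 : sup (g 2) ≠ sup (f 2) := by
    rcases hk with ⟨hk0, hk1⟩ | ⟨hk0, hk1⟩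
    · have hq : sup (g 2) = sup (f 3) :=
        save_eq hk0 (hn k0) (H _ _ _ hg2) (Hb _ _ _ hg2) (H _ _ _ hf3) (Hb _ _ _ hf3)
      have h23 := H _ _ _ hf2
      rw [hk1] at h23
      simp only [Interaction.eval, Option.some_inj] at h23
      rw [hq, ← h23]
      exact Bool.not_ne_self _
    · have hq : sup (g 3) = sup (f 2) :=
        save_eq hk1 (hn k1) (H _ _ _ hg3) (Hb _ _ _ hg3) (H _ _ _ hf2) (Hb _ _ _ hf2)
      have h23 := H _ _ _ hg2
      rw [hk0] at h23
      simp only [Interaction.eval, Option.some_inj] at h23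
      rw [← hq, ← h23]
      exact (Bool.not_ne_self _).symm
  obtain ⟨hw, hne1⟩ := step (hn w) (H _ _ _ hg1) (Hb _ _ _ hg1)
    (H _ _ _ hf1) (Hb _ _ _ hf1) hne2
  obtain ⟨hv, _⟩ := step (hn v) (H _ _ _ hg0) (Hb _ _ _ hg0)
    (H _ _ _ hf0) (Hb _ _ _ hf0) hne1
  exact ⟨hv, hw⟩
end

section
/- Let τ be a nop-free Boolean type of net and A a bi-directed transition system containing the bi-directed paths T = t0 ↔k0 t1 ↔v0 t2 ↔v1 t3 ↔X0 t4 ↔v2 t5 ↔X1 t6 ↔v3 t7 ↔X2 t8 ↔v4 t9 ↔v5 t10 ↔k0 t11 and Q = q0 ↔X0 q1 ↔v6 q2 ↔X2 q3. If R=(sup,sig) is a τ-region of A with sig(k0) ∈ save = {nop,set,used,res,free} and sig(vi) = swap for all i ∈ {0,...,6}, then there is exactly one X ∈ {X0,X1,X2} such that sig(X) ≠ swap. -/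

lemma const_of_non_swap {S E : Type} (edge : S → E → S → Prop) (hbi : BiDirected edge)
    (τ : Set Interaction) (sup : S → Bool) (sig : E → Interaction)
    (hreg : IsRegion edge τ sup sig) (e : E) (s s' : S) (hedge : edge s e s')
    (hnop : sig e ≠ Interaction.nop) (hswap : sig e ≠ Interaction.swap) :
    ∃ c, ∀ u u', edge u e u' → sup u = c ∧ sup u' = c := by
  have hedge' := hbi.2 s e s' hedge
  have h1 := hreg.2 s e s' hedge
  have h2 := hreg.2 s' e s hedge'
  cases h : sig e
  · exact absurd h hnop
  · -- inp: contradiction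
    exfalso
    rw [h] at h1 h2
    cases hs : sup s <;> rw [hs] at h1 h2 <;> simp [Interaction.eval] at h1 h2
    rw [h1] at h2; simp [Interaction.eval] at h2
  · -- out
    exfalso
    rw [h] at h1 h2
    cases hs : sup s <;> rw [hs] at h1 h2 <;> simp [Interaction.eval] at h1 h2
    rw [h1] at h2; simp [Interaction.eval] at h2
  · -- res: c = false
    refine ⟨false, fun u u' he => ?_⟩
    have g1 := hreg.2 u e u' he
    have g2 := hreg.2 u' e u (hbi.2 u e u' he)
    rw [h] at g1 g2
    simp [Interaction.eval] at g1 g2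
    exact ⟨g2, g1⟩
  · -- set
    refine ⟨true, fun u u' he => ?_⟩
    have g1 := hreg.2 u e u' he
    have g2 := hreg.2 u' e u (hbi.2 u e u' he)
    rw [h] at g1 g2
    simp [Interaction.eval] at g1 g2
    exact ⟨g2, g1⟩
  · exact absurd h hswap
  · -- used
    refine ⟨true, fun u u' he => ?_⟩
    have g1 := hreg.2 u e u' he
    rw [h] at g1
    cases hu : sup u <;> rw [hu] at g1 <;> simp [Interaction.eval] at g1
    exact ⟨rfl, g1⟩
  · -- free
    refine ⟨false, fun u u' he => ?_⟩
    have g1 := hreg.2 u e u' he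
    rw [h] at g1
    cases hu : sup u <;> rw [hu] at g1 <;> simp [Interaction.eval] at g1
    exact ⟨rfl, g1⟩

lemma swap_edge {S E : Type} (edge : S → E → S → Prop)
    (τ : Set Interaction) (sup : S → Bool) (sig : E → Interaction)
    (hreg : IsRegion edge τ sup sig) (e : E) (s s' : S) (hedge : edge s e s')
    (hswap : sig e = Interaction.swap) : sup s' = !(sup s) := by
  have h1 := hreg.2 s e s' hedge
  rw [hswap] at h1
  simp [Interaction.eval] at h1
  cases hs : sup s' <;> cases hs' : sup s <;> simp_all

/-- for a `nop`-free type `τ` and a bi-directed TS `A` containing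
the bi-directed paths
`T = t₀ k₀ t₁ v₀ t₂ v₁ t₃ X₀ t₄ v₂ t₅ X₁ t₆ v₃ t₇ X₂ t₈ v₄ t₉ v₅ t₁₀ k₀ t₁₁`
and `Q = q₀ X₀ q₁ v₆ q₂ X₂ q₃`, if `(sup,sig)` is a `τ`-region of `A` with
`sig k₀ ∈ save` and `sig vᵢ = swap` for all `i`, then there is exactly one
`X ∈ {X₀,X₁,X₂}` with `sig X ≠ swap`. -/
theorem gadget_exactly_one_non_swap
    {S E : Type} [Finite S] [Finite E]
    (edge : S → E → S → Prop) (hdet : Deterministic edge) (hbi : BiDirected edge)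
    (τ : Set Interaction) (hnf : Interaction.nop ∉ τ)
    (sup : S → Bool) (sig : E → Interaction) (hreg : IsRegion edge τ sup sig)
    (t : Fin 12 → S) (q : Fin 4 → S)
    (k0 : E) (v : Fin 7 → E) (X : Fin 3 → E)
    (ht0 : edge (t 0) k0 (t 1)) (ht1 : edge (t 1) (v 0) (t 2))
    (ht2 : edge (t 2) (v 1) (t 3)) (ht3 : edge (t 3) (X 0) (t 4))
    (ht4 : edge (t 4) (v 2) (t 5)) (ht5 : edge (t 5) (X 1) (t 6))
    (ht6 : edge (t 6) (v 3) (t 7)) (ht7 : edge (t 7) (X 2) (t 8))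
    (ht8 : edge (t 8) (v 4) (t 9)) (ht9 : edge (t 9) (v 5) (t 10))
    (ht10 : edge (t 10) k0 (t 11))
    (hq0 : edge (q 0) (X 0) (q 1)) (hq1 : edge (q 1) (v 6) (q 2))
    (hq2 : edge (q 2) (X 2) (q 3))
    (htinj : Function.Injective t) (hqinj : Function.Injective q)
    (hev : ([k0, v 0, v 1, v 2, v 3, v 4, v 5, v 6, X 0, X 1, X 2] : List E).Nodup)
    (hk0 : sig k0 ∈ saveSet) (hv : ∀ i : Fin 7, sig (v i) = Interaction.swap) :
    (sig (X 0) ≠ Interaction.swap ∧ sig (X 1) = Interaction.swap ∧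
        sig (X 2) = Interaction.swap) ∨
      (sig (X 0) = Interaction.swap ∧ sig (X 1) ≠ Interaction.swap ∧
        sig (X 2) = Interaction.swap) ∨
      (sig (X 0) = Interaction.swap ∧ sig (X 1) = Interaction.swap ∧
        sig (X 2) ≠ Interaction.swap) := by

  -- k0 is in saveSet and in τ, hence not nop (nop ∉ τ) and not swap
  have hk0nop : sig k0 ≠ Interaction.nop := fun h => hnf (h ▸ hreg.1 k0)
  have hk0swap : sig k0 ≠ Interaction.swap := by
    intro h; rw [h] at hk0
    simp [saveSet] at hk0
  obtain ⟨c, hc⟩ := const_of_non_swap edge hbi τ sup sig hreg k0 _ _ ht0 hk0nop hk0swap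
  have e1 : sup (t 1) = c := (hc _ _ ht0).2
  have e10 : sup (t 10) = c := (hc _ _ ht10).1
  -- swap edges
  have e2 : sup (t 2) = !(sup (t 1)) := swap_edge edge τ sup sig hreg _ _ _ ht1 (hv 0)
  have e3 : sup (t 3) = !(sup (t 2)) := swap_edge edge τ sup sig hreg _ _ _ ht2 (hv 1)
  have e5 : sup (t 5) = !(sup (t 4)) := swap_edge edge τ sup sig hreg _ _ _ ht4 (hv 2)
  have e7 : sup (t 7) = !(sup (t 6)) := swap_edge edge τ sup sig hreg _ _ _ ht6 (hv 3)
  have e9 : sup (t 9) = !(sup (t 8)) := swap_edge edge τ sup sig hreg _ _ _ ht8 (hv 4)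
  have e10' : sup (t 10) = !(sup (t 9)) := swap_edge edge τ sup sig hreg _ _ _ ht9 (hv 5)
  have eq2 : sup (q 2) = !(sup (q 1)) := swap_edge edge τ sup sig hreg _ _ _ hq1 (hv 6)
  have hXnop : ∀ i : Fin 3, sig (X i) ≠ Interaction.nop := fun i h => hnf (h ▸ hreg.1 (X i))
  by_cases h0 : sig (X 0) = Interaction.swap <;>
  by_cases h1 : sig (X 1) = Interaction.swap <;>
  by_cases h2 : sig (X 2) = Interaction.swap
  · -- all swap : contradiction
    exfalso
    have f4 : sup (t 4) = !(sup (t 3)) := swap_edge edge τ sup sig hreg _ _ _ ht3 h0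
    have f6 : sup (t 6) = !(sup (t 5)) := swap_edge edge τ sup sig hreg _ _ _ ht5 h1
    have f8 : sup (t 8) = !(sup (t 7)) := swap_edge edge τ sup sig hreg _ _ _ ht7 h2
    rw [e1] at e2; rw [e2] at e3; rw [e3] at f4; rw [f4] at e5; rw [e5] at f6
    rw [f6] at e7; rw [e7] at f8; rw [f8] at e9; rw [e9] at e10'; rw [e10] at e10'
    cases c <;> simp at e10'
  · exact Or.inr (Or.inr ⟨h0, h1, h2⟩)
  · exact Or.inr (Or.inl ⟨h0, h1, h2⟩)
  · -- X0 swap, X1 X2 non-swap : parity contradiction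
    exfalso
    have f4 : sup (t 4) = !(sup (t 3)) := swap_edge edge τ sup sig hreg _ _ _ ht3 h0
    obtain ⟨c1, hc1⟩ := const_of_non_swap edge hbi τ sup sig hreg _ _ _ ht5 (hXnop 1) h1
    obtain ⟨c2, hc2⟩ := const_of_non_swap edge hbi τ sup sig hreg _ _ _ ht7 (hXnop 2) h2
    have f5 : sup (t 5) = c1 := (hc1 _ _ ht5).1
    have f6 : sup (t 6) = c1 := (hc1 _ _ ht5).2
    have f7 : sup (t 7) = c2 := (hc2 _ _ ht7).1
    have f8 : sup (t 8) = c2 := (hc2 _ _ ht7).2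
    rw [e1] at e2; rw [e2] at e3; rw [e3] at f4; rw [f4] at e5; rw [f5] at e5
    rw [f6, f7] at e7; rw [f8] at e9; rw [e9] at e10'; rw [e10] at e10'
    subst e5 e7; cases c <;> simp at e10'
  · exact Or.inl ⟨h0, h1, h2⟩
  · -- X1 swap, X0 X2 non-swap : parity contradiction
    exfalso
    have f6 : sup (t 6) = !(sup (t 5)) := swap_edge edge τ sup sig hreg _ _ _ ht5 h1
    obtain ⟨c0, hc0⟩ := const_of_non_swap edge hbi τ sup sig hreg _ _ _ ht3 (hXnop 0) h0
    obtain ⟨c2, hc2⟩ := const_of_non_swap edge hbi τ sup sig hreg _ _ _ ht7 (hXnop 2) h2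
    have f3 : sup (t 3) = c0 := (hc0 _ _ ht3).1
    have f4 : sup (t 4) = c0 := (hc0 _ _ ht3).2
    have f7 : sup (t 7) = c2 := (hc2 _ _ ht7).1
    have f8 : sup (t 8) = c2 := (hc2 _ _ ht7).2
    rw [e1] at e2; rw [e2] at e3; rw [f3] at e3; rw [f4] at e5; rw [e5] at f6
    rw [f6, f7] at e7; rw [f8] at e9; rw [e9] at e10'; rw [e10] at e10'
    subst e3 e7; cases c <;> simp at e10'
  · -- X2 swap, X0 X1 non-swap : parity contradiction
    exfalso
    have f8 : sup (t 8) = !(sup (t 7)) := swap_edge edge τ sup sig hreg _ _ _ ht7 h2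
    obtain ⟨c0, hc0⟩ := const_of_non_swap edge hbi τ sup sig hreg _ _ _ ht3 (hXnop 0) h0
    obtain ⟨c1, hc1⟩ := const_of_non_swap edge hbi τ sup sig hreg _ _ _ ht5 (hXnop 1) h1
    have f3 : sup (t 3) = c0 := (hc0 _ _ ht3).1
    have f4 : sup (t 4) = c0 := (hc0 _ _ ht3).2
    have f5 : sup (t 5) = c1 := (hc1 _ _ ht5).1
    have f6 : sup (t 6) = c1 := (hc1 _ _ ht5).2
    rw [e1] at e2; rw [e2] at e3; rw [f3] at e3; rw [f4] at e5; rw [f5] at e5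
    rw [f6] at e7; rw [e7] at f8; rw [f8] at e9; rw [e9] at e10'; rw [e10] at e10'
    subst e3 e5; cases c <;> simp at e10'
  · -- all non-swap : use Q for contradiction
    exfalso
    obtain ⟨c0, hc0⟩ := const_of_non_swap edge hbi τ sup sig hreg _ _ _ ht3 (hXnop 0) h0
    obtain ⟨c1, hc1⟩ := const_of_non_swap edge hbi τ sup sig hreg _ _ _ ht5 (hXnop 1) h1
    obtain ⟨c2, hc2⟩ := const_of_non_swap edge hbi τ sup sig hreg _ _ _ ht7 (hXnop 2) h2
    have f3 : sup (t 3) = c0 := (hc0 _ _ ht3).1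
    have f4 : sup (t 4) = c0 := (hc0 _ _ ht3).2
    have f5 : sup (t 5) = c1 := (hc1 _ _ ht5).1
    have f6 : sup (t 6) = c1 := (hc1 _ _ ht5).2
    have f7 : sup (t 7) = c2 := (hc2 _ _ ht7).1
    have g1 : sup (q 1) = c0 := (hc0 _ _ hq0).2
    have g2 : sup (q 2) = c2 := (hc2 _ _ hq2).1
    rw [f4] at e5; rw [f5] at e5
    rw [f6, f7] at e7
    rw [g1, g2] at eq2
    -- e5 : c1 = !c0, e7 : c2 = !c1, eq2 : c2 = !c0
    rw [e5] at e7
    rw [e7] at eq2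
    cases c0 <;> simp at eq2
end

section
/- Let τ = {nop,inp} and let φ = {ζ0,...,ζ_{m-1}} be an instance of cubic monotone 1-in-3 3SAT with variables X = {X0,...,X_{m-1}} and clauses ζi = {X_{i0},X_{i1},X_{i2}}, and let A_φ be the transition system associated to φ as defined in the context. If A_φ has the τ-SSP, then φ has a one-in-three model. -/
/-- An instance of cubic monotone 1-in-3 3SAT: `m` clauses
`ζ i = {X (c0 i), X (c1 i), X (c2 i)}` over the `m` variables `Fin m`; each
clause consists of three distinct variables and every variable occurs in
exactly three clauses. -/
def CubicMonotone {m : ℕ} (c0 c1 c2 : Fin m → Fin m) : Prop :=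
  (∀ i, c0 i ≠ c1 i ∧ c0 i ≠ c2 i ∧ c1 i ≠ c2 i) ∧
    ∀ x : Fin m,
      (Finset.univ.filter fun i => c0 i = x ∨ c1 i = x ∨ c2 i = x).card = 3

/-- `M` is a one-in-three model: it contains exactly one variable of every
clause. -/
def OneInThreeModel {m : ℕ} (c0 c1 c2 : Fin m → Fin m) (M : Set (Fin m)) : Prop :=
  ∀ i : Fin m,
    (c0 i ∈ M ∧ c1 i ∉ M ∧ c2 i ∉ M) ∨
      (c0 i ∉ M ∧ c1 i ∈ M ∧ c2 i ∉ M) ∨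
      (c0 i ∉ M ∧ c1 i ∉ M ∧ c2 i ∈ M)

/-- The states of the TS `A_φ`: `⊤`; `t_{i,0}` for `i ∈ {0,…,m+1}`;
`t_{i,j}` for `i < m`, `j ∈ {1,2,3}` (here `t i j` encodes `t_{i,j+1}`);
and `g_{i,j}` for `i < m`, `j ∈ {0,1,2}`. -/
inductive PhiState (m : ℕ) : Type
  | top : PhiState m
  | t0 (i : Fin (m + 2)) : PhiState m
  | t (i : Fin m) (j : Fin 3) : PhiState m
  | g (i : Fin m) (j : Fin 3) : PhiState m

/-- The events of `A_φ`: `w_i`, `k`, `v`, `u_i`, `y_i` and the variables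
`X_x`. -/
inductive PhiEvent (m : ℕ) : Type
  | w (i : Fin m) : PhiEvent m
  | k : PhiEvent m
  | v : PhiEvent m
  | u (i : Fin m) : PhiEvent m
  | y (i : Fin m) : PhiEvent m
  | X (x : Fin m) : PhiEvent m

/-- The edges of the TS `A_φ` (with initial state `t_{0,0}`):
the path `P : t_{0,0} →w₀ t_{1,0} →w₁ … →w_{m-1} t_{m,0} →k t_{m+1,0} →v ⊤`;
for every clause `i` the path
`T_i : t_{i,0} →X_{i0} t_{i,1} →X_{i1} t_{i,2} →X_{i2} t_{i,3} →u_i ⊤`; and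
for every `i` the path `G_i : t_{0,0} →y_i g_{i,0} →u_i g_{i,1} →k g_{i,2}`. -/
inductive PhiEdge {m : ℕ} (c0 c1 c2 : Fin m → Fin m) :
    PhiState m → PhiEvent m → PhiState m → Prop
  | w (i : Fin m) :
      PhiEdge c0 c1 c2 (.t0 ⟨i.val, by have := i.isLt; omega⟩) (.w i)
        (.t0 ⟨i.val + 1, by have := i.isLt; omega⟩)
  | k : PhiEdge c0 c1 c2 (.t0 ⟨m, by omega⟩) .k (.t0 ⟨m + 1, by omega⟩)
  | v : PhiEdge c0 c1 c2 (.t0 ⟨m + 1, by omega⟩) .v .top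
  | x0 (i : Fin m) :
      PhiEdge c0 c1 c2 (.t0 ⟨i.val, by have := i.isLt; omega⟩) (.X (c0 i)) (.t i 0)
  | x1 (i : Fin m) : PhiEdge c0 c1 c2 (.t i 0) (.X (c1 i)) (.t i 1)
  | x2 (i : Fin m) : PhiEdge c0 c1 c2 (.t i 1) (.X (c2 i)) (.t i 2)
  | u (i : Fin m) : PhiEdge c0 c1 c2 (.t i 2) (.u i) .top
  | y (i : Fin m) : PhiEdge c0 c1 c2 (.t0 ⟨0, by omega⟩) (.y i) (.g i 0)
  | gu (i : Fin m) : PhiEdge c0 c1 c2 (.g i 0) (.u i) (.g i 1)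
  | gk (i : Fin m) : PhiEdge c0 c1 c2 (.g i 1) .k (.g i 2)

/-- for `τ = {nop,inp}` and an instance `φ` of cubic monotone
1-in-3 3SAT, if `A_φ` has the `τ`-SSP, then `φ` has a one-in-three model. -/
theorem Aphi_ssp_implies_model
    {m : ℕ} (c0 c1 c2 : Fin m → Fin m) (hcubic : CubicMonotone c0 c1 c2)
    (hssp : HasSSP (PhiEdge c0 c1 c2) {Interaction.nop, Interaction.inp}) :
    ∃ M : Set (Fin m), OneInThreeModel c0 c1 c2 M := by
  classical
  obtain ⟨sup, sig, ⟨hτ, hreg⟩, hne⟩ :=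
    hssp (.t0 ⟨m, by omega⟩) (.t0 ⟨m + 1, by omega⟩)
      (by intro h; rw [PhiState.t0.injEq, Fin.mk.injEq] at h; omega)
  have hk := hreg _ _ _ (PhiEdge.k (c0 := c0) (c1 := c1) (c2 := c2))
  have hmemk := hτ .k
  simp only [Set.mem_insert_iff, Set.mem_singleton_iff] at hmemk
  have hsigk : sig .k = .inp := by
    rcases hmemk with h | h
    · exfalso; rw [h] at hk; simp only [Interaction.eval, Option.some.injEq] at hk
      exact hne hk
    · exact h
  rw [hsigk] at hk
  have hsupm : sup (.t0 ⟨m, by omega⟩) = true := by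
    cases hsm : sup (.t0 ⟨m, by omega⟩) <;> rw [hsm] at hk <;>
      simp [Interaction.eval] at hk ⊢
  rw [hsupm] at hk
  simp only [Interaction.eval, Option.some.injEq] at hk
  -- hk : false = sup (t0 (m+1))
  have hsupm1 : sup (.t0 ⟨m + 1, by omega⟩) = false := hk.symm
  -- sup ⊤ = false
  have hv := hreg _ _ _ (PhiEdge.v (c0 := c0) (c1 := c1) (c2 := c2))
  have hmemv := hτ .v
  simp only [Set.mem_insert_iff, Set.mem_singleton_iff] at hmemv
  have hsuptop : sup .top = false := by
    rcases hmemv with h | h <;> rw [h, hsupm1] at hv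
    · simp only [Interaction.eval, Option.some.injEq] at hv; exact hv.symm
    · simp [Interaction.eval] at hv
  -- sup (g i 1) = true
  have hg1 : ∀ i : Fin m, sup (.g i 1) = true := by
    intro i
    have hgk := hreg _ _ _ (PhiEdge.gk (c0 := c0) (c1 := c1) (c2 := c2) i)
    rw [hsigk] at hgk
    cases hb : sup (.g i 1) <;> rw [hb] at hgk <;>
      simp [Interaction.eval] at hgk ⊢
  -- sig (u i) = nop
  have hsigu : ∀ i : Fin m, sig (.u i) = .nop := by
    intro i
    have hgu := hreg _ _ _ (PhiEdge.gu (c0 := c0) (c1 := c1) (c2 := c2) i)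
    rw [hg1 i] at hgu
    have hmemu := hτ (.u i)
    simp only [Set.mem_insert_iff, Set.mem_singleton_iff] at hmemu
    rcases hmemu with h | h
    · exact h
    · exfalso; rw [h] at hgu
      cases hb : sup (.g i 0) <;> rw [hb] at hgu <;>
        simp [Interaction.eval] at hgu
  -- sup (t i 2) = false
  have ht2 : ∀ i : Fin m, sup (.t i 2) = false := by
    intro i
    have hu := hreg _ _ _ (PhiEdge.u (c0 := c0) (c1 := c1) (c2 := c2) i)
    rw [hsigu i, hsuptop] at hu
    simpa [Interaction.eval] using hu
  -- sup (t0 j) = true for j ≤ m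
  have hpath : ∀ d j (hjm : j + d = m), sup (.t0 ⟨j, by omega⟩) = true := by
    intro d
    induction d with
    | zero =>
      intro j hjm
      have : j = m := by omega
      subst this; exact hsupm
    | succ d ih =>
      intro j hjm
      have hw := hreg _ _ _ (PhiEdge.w (c0 := c0) (c1 := c1) (c2 := c2) ⟨j, by omega⟩)
      have ht : sup (.t0 ⟨j + 1, by omega⟩) = true := ih (j + 1) (by omega)
      rw [ht] at hw
      have hmemw := hτ (.w ⟨j, by omega⟩)
      simp only [Set.mem_insert_iff, Set.mem_singleton_iff] at hmemw
      rcases hmemw with h | h <;> rw [h] at hw <;>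
        simp only [Interaction.eval, Option.some.injEq] at hw
      · exact hw
      · exfalso
        cases hb : sup (.t0 ⟨j, by omega⟩) <;> rw [hb] at hw <;>
          simp [Interaction.eval] at hw
  refine ⟨{x | sig (.X x) = .inp}, ?_⟩
  intro i
  have e0 := hreg _ _ _ (PhiEdge.x0 (c0 := c0) (c1 := c1) (c2 := c2) i)
  have e1 := hreg _ _ _ (PhiEdge.x1 (c0 := c0) (c1 := c1) (c2 := c2) i)
  have e2 := hreg _ _ _ (PhiEdge.x2 (c0 := c0) (c1 := c1) (c2 := c2) i)
  have hs0 : sup (.t0 ⟨i.val, by have := i.isLt; omega⟩) = true :=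
    hpath (m - i.val) i.val (by have := i.isLt; omega)
  rw [hs0] at e0
  rw [ht2 i] at e2
  have m0 := hτ (.X (c0 i)); have m1 := hτ (.X (c1 i)); have m2 := hτ (.X (c2 i))
  simp only [Set.mem_insert_iff, Set.mem_singleton_iff] at m0 m1 m2
  simp only [OneInThreeModel, Set.mem_setOf_eq]
  rcases m0 with h0 | h0 <;> rcases m1 with h1 | h1 <;> rcases m2 with h2 | h2 <;>
    rw [h0] at e0 ⊢ <;> rw [h1] at e1 ⊢ <;> rw [h2] at e2 ⊢ <;>
    cases hb0 : sup (.t i 0) <;> rw [hb0] at e0 e1 <;>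
    cases hb1 : sup (.t i 1) <;> rw [hb1] at e1 e2 <;>
    first
      | exact absurd e0 (by decide)
      | exact absurd e1 (by decide)
      | exact absurd e2 (by decide)
      | decide
end

section
/- Let τ = {nop,inp} and let φ = {ζ0,...,ζ_{m-1}} be an instance of cubic monotone 1-in-3 3SAT with variables X = {X0,...,X_{m-1}} and clauses ζi = {X_{i0},X_{i1},X_{i2}}, and let A_φ be the transition system associated to φ as defined in the context. If φ has a one-in-three model, then A_φ has the τ-SSP. -/
/-! A `{nop, inp}`-region with support `1` at the initial state is determined by its set of
`inp` events. Five families of such regions solve all atoms of `A_φ`: `top` (`inp` at `v` and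
the `u_i`) isolates `⊤` and the `g_{i,0}`; `gadget i` (`inp` at `y_i`) isolates `G_i`;
`prefix i` (`inp` at `w_i` and at `u_j` for `j ≤ i`) cuts `P` and the `T_j` after position `i`;
`variable x` (`inp` at `v`, `X_x` and the `u_i` of the clauses avoiding `x`) separates `P` from
the `T_i` and the states of one `T_i` from each other. What remains are the atoms
`(t_{m,0}, t_{m+1,0})` and `(g_{i,1}, g_{i,2})`, which force `k` to be `inp`; then every `T_i`
drops from `1` to `0` through its `X`-events alone, so the `inp` variables form a one-in-three
model, and conversely a model `M` gives such a region. -/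

def Interaction.inpOn {E : Type} (p : E → Bool) : E → Interaction :=
  fun e => bif p e then .inp else .nop

theorem isRegion_inpOn {S E : Type} {edge : S → E → S → Prop} {sup : S → Bool}
    {p : E → Bool}
    (h : ∀ s e s', edge s e s' →
      if p e then sup s = true ∧ sup s' = false else sup s' = sup s) :
    IsRegion edge {.nop, .inp} sup (Interaction.inpOn p) := by
  refine ⟨fun e => ?_, fun s e s' hs => ?_⟩
  · cases hp : p e <;> simp [Interaction.inpOn, hp]
  · have := h s e s' hs
    cases hp : p e <;> cases hs : sup s <;> simp_all [Interaction.inpOn, Interaction.eval]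

def SSPSolvable {S E : Type} (edge : S → E → S → Prop) (τ : Set Interaction) (s s' : S) :
    Prop :=
  ∃ sup sig, IsRegion edge τ sup sig ∧ sup s ≠ sup s'

theorem SSPSolvable.symm {S E : Type} {edge : S → E → S → Prop} {τ : Set Interaction}
    {s s' : S} (h : SSPSolvable edge τ s s') : SSPSolvable edge τ s' s :=
  let ⟨sup, sig, hR, hs⟩ := h
  ⟨sup, sig, hR, hs.symm⟩

namespace PhiEdge

variable {m : ℕ} {c0 c1 c2 : Fin m → Fin m}

def topSup : PhiState m → Bool
  | .top => false
  | .g _ j => decide (j = 0)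
  | _ => true

def topInp : PhiEvent m → Bool
  | .v | .u _ => true
  | _ => false

theorem isRegion_top :
    IsRegion (PhiEdge c0 c1 c2) {.nop, .inp} topSup (Interaction.inpOn topInp) :=
  isRegion_inpOn fun _ _ _ h => by cases h <;> simp [topSup, topInp]

def gadgetSup (i : Fin m) : PhiState m → Bool
  | .g i' _ => decide (i' ≠ i)
  | _ => true

def gadgetInp (i : Fin m) : PhiEvent m → Bool
  | .y i' => decide (i' = i)
  | _ => false

theorem isRegion_gadget (i : Fin m) :
    IsRegion (PhiEdge c0 c1 c2) {.nop, .inp} (gadgetSup i) (Interaction.inpOn (gadgetInp i)) :=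
  isRegion_inpOn fun _ _ _ h => by
    cases h <;> simp [gadgetSup, gadgetInp]

def prefixSup (i : Fin m) : PhiState m → Bool
  | .top => false
  | .t0 a => decide (a.val ≤ i.val)
  | .t j _ => decide (j ≤ i)
  | .g j l => decide (l = 0 ∨ i < j)

def prefixInp (i : Fin m) : PhiEvent m → Bool
  | .w j => decide (j = i)
  | .u j => decide (j ≤ i)
  | _ => false

theorem isRegion_prefix (i : Fin m) :
    IsRegion (PhiEdge c0 c1 c2) {.nop, .inp} (prefixSup i) (Interaction.inpOn (prefixInp i)) :=
  isRegion_inpOn fun _ _ _ h => by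
    cases h <;> simp [prefixSup, prefixInp] <;>
      first | omega | (split_ifs <;> omega)

variable (c0 c1 c2) in
/-- Support along `T_i`: `notYetRead p i l` holds at `t_{i,l+1}` iff none of the first `l + 1`
variables of `ζ_i` satisfies `p`. -/
def notYetRead (p : Fin m → Prop) [DecidablePred p] (i : Fin m) : Fin 3 → Bool
  | 0 => decide (¬ p (c0 i))
  | 1 => decide (¬ p (c0 i) ∧ ¬ p (c1 i))
  | 2 => decide (¬ p (c0 i) ∧ ¬ p (c1 i) ∧ ¬ p (c2 i))

variable (c0 c1 c2) in
def modelSup (M : Set (Fin m)) [DecidablePred (· ∈ M)] : PhiState m → Bool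
  | .top => false
  | .t0 a => decide (a.val ≤ m)
  | .t i l => notYetRead c0 c1 c2 (· ∈ M) i l
  | .g _ l => decide (l ≠ 2)

def modelInp (M : Set (Fin m)) [DecidablePred (· ∈ M)] : PhiEvent m → Bool
  | .k => true
  | .X x => decide (x ∈ M)
  | _ => false

theorem isRegion_model {M : Set (Fin m)} [DecidablePred (· ∈ M)]
    (hM : OneInThreeModel c0 c1 c2 M) :
    IsRegion (PhiEdge c0 c1 c2) {.nop, .inp} (modelSup c0 c1 c2 M)
      (Interaction.inpOn (modelInp M)) :=
  isRegion_inpOn fun _ _ _ h => by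
    cases h <;> simp [modelSup, modelInp, notYetRead]
    case x1 i | x2 i | u i =>
      rcases hM i with ⟨h0, h1, h2⟩ | ⟨h0, h1, h2⟩ | ⟨h0, h1, h2⟩ <;> simp [h0, h1, h2]

variable (c0 c1 c2) in
def variableSup (x : Fin m) : PhiState m → Bool
  | .top => false
  | .t0 _ => true
  | .t i l => notYetRead c0 c1 c2 (· = x) i l
  | .g i l => decide (l = 0 ∨ c0 i = x ∨ c1 i = x ∨ c2 i = x)

variable (c0 c1 c2) in
def variableInp (x : Fin m) : PhiEvent m → Bool
  | .v => true
  | .X z => decide (z = x)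
  | .u i => decide ¬(c0 i = x ∨ c1 i = x ∨ c2 i = x)
  | _ => false

theorem isRegion_variable (hd : ∀ i, c0 i ≠ c1 i ∧ c0 i ≠ c2 i ∧ c1 i ≠ c2 i) (x : Fin m) :
    IsRegion (PhiEdge c0 c1 c2) {.nop, .inp} (variableSup c0 c1 c2 x)
      (Interaction.inpOn (variableInp c0 c1 c2 x)) :=
  isRegion_inpOn fun _ _ _ h => by
    cases h <;> simp [variableSup, variableInp, notYetRead]
    case x1 i | x2 i =>
      have := hd i
      split_ifs <;> simp_all
    case gu => tauto

theorem sspSolvable_top_t0 (a : Fin (m + 2)) :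
    SSPSolvable (PhiEdge c0 c1 c2) {.nop, .inp} .top (.t0 a) :=
  ⟨_, _, isRegion_top, by simp [topSup]⟩

theorem sspSolvable_top_t (i : Fin m) (l : Fin 3) :
    SSPSolvable (PhiEdge c0 c1 c2) {.nop, .inp} .top (.t i l) :=
  ⟨_, _, isRegion_top, by simp [topSup]⟩

theorem sspSolvable_g_g {M : Set (Fin m)} [DecidablePred (· ∈ M)]
    (hM : OneInThreeModel c0 c1 c2 M) (i : Fin m) {l l' : Fin 3} (h : l ≠ l') :
    SSPSolvable (PhiEdge c0 c1 c2) {.nop, .inp} (.g i l) (.g i l') := by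
  wlog hll : l < l' generalizing l l'
  · exact (this h.symm (lt_of_le_of_ne (not_lt.1 hll) h.symm)).symm
  by_cases hl : l = 0
  · exact ⟨_, _, isRegion_top, by simp [topSup, hl]; omega⟩
  · exact ⟨_, _, isRegion_model hM, by simp [modelSup]; omega⟩

theorem sspSolvable_g {M : Set (Fin m)} [DecidablePred (· ∈ M)]
    (hM : OneInThreeModel c0 c1 c2 M) {i : Fin m} {l : Fin 3} {s : PhiState m}
    (hs : s ≠ .g i l) : SSPSolvable (PhiEdge c0 c1 c2) {.nop, .inp} (.g i l) s := by
  by_cases hsg : ∃ l', s = .g i l'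
  · obtain ⟨l', rfl⟩ := hsg
    exact sspSolvable_g_g hM i (by rintro rfl; exact hs rfl)
  · push Not at hsg
    refine ⟨_, _, isRegion_gadget i, ?_⟩
    cases s <;> simp_all [gadgetSup]

theorem sspSolvable_t0_t0 {M : Set (Fin m)} [DecidablePred (· ∈ M)]
    (hM : OneInThreeModel c0 c1 c2 M) {a b : Fin (m + 2)} (h : a ≠ b) :
    SSPSolvable (PhiEdge c0 c1 c2) {.nop, .inp} (.t0 a) (.t0 b) := by
  wlog hab : a < b generalizing a b
  · exact (this h.symm (lt_of_le_of_ne (not_lt.1 hab) h.symm)).symm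
  by_cases ha : a.val < m
  · exact ⟨_, _, isRegion_prefix ⟨a, ha⟩, by simp [prefixSup]; omega⟩
  · exact ⟨_, _, isRegion_model hM, by simp [modelSup]; omega⟩

theorem sspSolvable_t0_t (hd : ∀ i, c0 i ≠ c1 i ∧ c0 i ≠ c2 i ∧ c1 i ≠ c2 i)
    (a : Fin (m + 2)) (i : Fin m) (l : Fin 3) :
    SSPSolvable (PhiEdge c0 c1 c2) {.nop, .inp} (.t0 a) (.t i l) :=
  ⟨_, _, isRegion_variable hd (c0 i), by fin_cases l <;> simp [variableSup, notYetRead]⟩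

theorem sspSolvable_t_t_of_ne (hd : ∀ i, c0 i ≠ c1 i ∧ c0 i ≠ c2 i ∧ c1 i ≠ c2 i)
    (i : Fin m) {l l' : Fin 3} (h : l ≠ l') :
    SSPSolvable (PhiEdge c0 c1 c2) {.nop, .inp} (.t i l) (.t i l') := by
  wlog hll : l < l' generalizing l l'
  · exact (this h.symm (lt_of_le_of_ne (not_lt.1 hll) h.symm)).symm
  obtain ⟨h01, h02, h12⟩ := hd i
  fin_cases l <;> fin_cases l' <;> simp at hll
  · exact ⟨_, _, isRegion_variable hd (c1 i), by simp [variableSup, notYetRead, h01]⟩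
  · exact ⟨_, _, isRegion_variable hd (c2 i), by simp [variableSup, notYetRead, h02]⟩
  · exact ⟨_, _, isRegion_variable hd (c2 i), by simp [variableSup, notYetRead, h02, h12]⟩

theorem sspSolvable_t_t (hd : ∀ i, c0 i ≠ c1 i ∧ c0 i ≠ c2 i ∧ c1 i ≠ c2 i)
    {i j : Fin m} {l l' : Fin 3} (h : PhiState.t i l ≠ .t j l') :
    SSPSolvable (PhiEdge c0 c1 c2) {.nop, .inp} (.t i l) (.t j l') := by
  wlog hij : i ≤ j generalizing i j l l'
  · exact (this h.symm (le_of_not_ge hij)).symm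
  rcases hij.lt_or_eq with hij | rfl
  · exact ⟨_, _, isRegion_prefix i, by simp [prefixSup]; omega⟩
  · exact sspSolvable_t_t_of_ne hd i (by rintro rfl; exact h rfl)

end PhiEdge

/-- for `τ = {nop,inp}` and an instance `φ` of cubic monotone
1-in-3 3SAT, if `φ` has a one-in-three model, then `A_φ` has the `τ`-SSP. -/
theorem model_implies_Aphi_ssp
    {m : ℕ} (c0 c1 c2 : Fin m → Fin m) (hcubic : CubicMonotone c0 c1 c2)
    (M : Set (Fin m)) (hM : OneInThreeModel c0 c1 c2 M) :
    HasSSP (PhiEdge c0 c1 c2) {Interaction.nop, Interaction.inp} := by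
  classical
  open PhiEdge in
  intro s s' hne
  rcases s with _ | a | ⟨i, l⟩ | ⟨i, l⟩ <;> rcases s' with _ | b | ⟨j, l'⟩ | ⟨j, l'⟩
  · exact absurd rfl hne
  · exact sspSolvable_top_t0 b
  · exact sspSolvable_top_t j l'
  · exact (sspSolvable_g hM hne).symm
  · exact (sspSolvable_top_t0 a).symm
  · exact sspSolvable_t0_t0 hM (ne_of_apply_ne PhiState.t0 hne)
  · exact sspSolvable_t0_t hcubic.1 a j l'
  · exact (sspSolvable_g hM hne).symm
  · exact (sspSolvable_top_t i l).symm
  · exact (sspSolvable_t0_t hcubic.1 b i l).symm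
  · exact sspSolvable_t_t hcubic.1 hne
  · exact (sspSolvable_g hM hne).symm
  all_goals exact sspSolvable_g hM hne.symm
end

section
/- Let τ be a nop-free Boolean type of net with swap ∈ τ and τ ∩ save ≠ ∅ (where save = {nop,set,used,res,free}), let φ be an instance of cubic monotone 1-in-3 3SAT, and let A_φ be the bi-directed transition system associated to φ as defined in the context. If A_φ has the τ-SSP, then φ has a one-in-three model. -/
/-- The states of the bi-directed TS `A_φ` of the nop-free reduction:
the initial state `ι`; the connector states `⊥_j` (`j < 2m`) and `⊤_j`
(`j < 14m`); the gadget states of `G_i, F_i, G_i', F_i'` (`i < 7m`) and of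
`T_{i,0}, T_{i,1}, T_{i,0}', T_{i,1}'` (`i < m`). -/
inductive BState (m : ℕ) : Type
  | iota : BState m
  | bot (j : Fin (2 * m)) : BState m
  | top (j : Fin (14 * m)) : BState m
  | g (i : Fin (7 * m)) (j : Fin 5) : BState m
  | f (i : Fin (7 * m)) (j : Fin 5) : BState m
  | g' (i : Fin (7 * m)) (j : Fin 5) : BState m
  | f' (i : Fin (7 * m)) (j : Fin 5) : BState m
  | t0 (i : Fin m) (j : Fin 12) : BState m
  | t1 (i : Fin m) (j : Fin 4) : BState m
  | t0' (i : Fin m) (j : Fin 12) : BState m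
  | t1' (i : Fin m) (j : Fin 4) : BState m

/-- The events of `A_φ`: `k₀, k₁`, `v_i, w_i, v_i', w_i'` (`i < 7m`), the
variables `X_x, X_x'` (`x < m`) and the connector events
`⊕_j, ⊗_j, ⊙_j, ⊙_j', ⊖_j, ⊖_j'`. -/
inductive BEvent (m : ℕ) : Type
  | k0 : BEvent m
  | k1 : BEvent m
  | v (i : Fin (7 * m)) : BEvent m
  | w (i : Fin (7 * m)) : BEvent m
  | v' (i : Fin (7 * m)) : BEvent m
  | w' (i : Fin (7 * m)) : BEvent m
  | X (x : Fin m) : BEvent m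
  | X' (x : Fin m) : BEvent m
  | oplus (j : Fin (2 * m)) : BEvent m
  | otimes (j : Fin (14 * m)) : BEvent m
  | odot (j : Fin (14 * m)) : BEvent m
  | odot' (j : Fin (14 * m)) : BEvent m
  | ominus (j : Fin (2 * m)) : BEvent m
  | ominus' (j : Fin (2 * m)) : BEvent m

/-- `v_{7i+j}` for a clause index `i < m` and `j < 7`. -/
def vIdx {m : ℕ} (i : Fin m) (j : Fin 7) : Fin (7 * m) :=
  ⟨7 * i.val + j.val, by have := i.isLt; have := j.isLt; omega⟩

/-- The predecessor of `⊥_j` on the path `ι ⊕₀ ⊥₀ ⊕₁ ⊥₁ …`. -/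
def prevBot {m : ℕ} (j : Fin (2 * m)) : BState m :=
  if j.val = 0 then BState.iota
  else BState.bot ⟨j.val - 1, by have := j.isLt; omega⟩

/-- The predecessor of `⊤_j` on the path `ι ⊗₀ ⊤₀ ⊗₁ ⊤₁ …`. -/
def prevTop {m : ℕ} (j : Fin (14 * m)) : BState m :=
  if j.val = 0 then BState.iota
  else BState.top ⟨j.val - 1, by have := j.isLt; omega⟩

/-- The `j`-th gadget starting state `s_j` of the sequence
`g_{0,0}, f_{0,0}, g_{1,0}, f_{1,0}, …, g_{7m-1,0}, f_{7m-1,0}`. -/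
def gadgetStart {m : ℕ} (j : Fin (14 * m)) : BState m :=
  if j.val % 2 = 0 then BState.g ⟨j.val / 2, by have := j.isLt; omega⟩ 0
  else BState.f ⟨j.val / 2, by have := j.isLt; omega⟩ 0

/-- The `j`-th primed gadget starting state `s_j'`. -/
def gadgetStart' {m : ℕ} (j : Fin (14 * m)) : BState m :=
  if j.val % 2 = 0 then BState.g' ⟨j.val / 2, by have := j.isLt; omega⟩ 0
  else BState.f' ⟨j.val / 2, by have := j.isLt; omega⟩ 0

/-- One direction of every bi-directed edge of `A_φ`. -/
inductive BEdge0 {m : ℕ} (c0 c1 c2 : Fin m → Fin m) :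
    BState m → BEvent m → BState m → Prop
  -- G_i = g_{i,0} v_i g_{i,1} w_i g_{i,2} k₀ g_{i,3} k₁ g_{i,4}
  | gv (i : Fin (7 * m)) : BEdge0 c0 c1 c2 (.g i 0) (.v i) (.g i 1)
  | gw (i : Fin (7 * m)) : BEdge0 c0 c1 c2 (.g i 1) (.w i) (.g i 2)
  | gk0 (i : Fin (7 * m)) : BEdge0 c0 c1 c2 (.g i 2) .k0 (.g i 3)
  | gk1 (i : Fin (7 * m)) : BEdge0 c0 c1 c2 (.g i 3) .k1 (.g i 4)
  -- F_i = f_{i,0} v_i f_{i,1} w_i f_{i,2} k₁ f_{i,3} k₀ f_{i,4}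
  | fv (i : Fin (7 * m)) : BEdge0 c0 c1 c2 (.f i 0) (.v i) (.f i 1)
  | fw (i : Fin (7 * m)) : BEdge0 c0 c1 c2 (.f i 1) (.w i) (.f i 2)
  | fk1 (i : Fin (7 * m)) : BEdge0 c0 c1 c2 (.f i 2) .k1 (.f i 3)
  | fk0 (i : Fin (7 * m)) : BEdge0 c0 c1 c2 (.f i 3) .k0 (.f i 4)
  -- G_i' = g_{i,0}' v_i' g_{i,1}' w_i' g_{i,2}' k₁ g_{i,3}' k₀ g_{i,4}'
  | g'v (i : Fin (7 * m)) : BEdge0 c0 c1 c2 (.g' i 0) (.v' i) (.g' i 1)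
  | g'w (i : Fin (7 * m)) : BEdge0 c0 c1 c2 (.g' i 1) (.w' i) (.g' i 2)
  | g'k1 (i : Fin (7 * m)) : BEdge0 c0 c1 c2 (.g' i 2) .k1 (.g' i 3)
  | g'k0 (i : Fin (7 * m)) : BEdge0 c0 c1 c2 (.g' i 3) .k0 (.g' i 4)
  -- F_i' = f_{i,0}' v_i' f_{i,1}' w_i' f_{i,2}' k₀ f_{i,3}' k₁ f_{i,4}'
  | f'v (i : Fin (7 * m)) : BEdge0 c0 c1 c2 (.f' i 0) (.v' i) (.f' i 1)
  | f'w (i : Fin (7 * m)) : BEdge0 c0 c1 c2 (.f' i 1) (.w' i) (.f' i 2)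
  | f'k0 (i : Fin (7 * m)) : BEdge0 c0 c1 c2 (.f' i 2) .k0 (.f' i 3)
  | f'k1 (i : Fin (7 * m)) : BEdge0 c0 c1 c2 (.f' i 3) .k1 (.f' i 4)
  -- T_{i,0}
  | t0k0a (i : Fin m) : BEdge0 c0 c1 c2 (.t0 i 0) .k0 (.t0 i 1)
  | t0v0 (i : Fin m) : BEdge0 c0 c1 c2 (.t0 i 1) (.v (vIdx i 0)) (.t0 i 2)
  | t0v1 (i : Fin m) : BEdge0 c0 c1 c2 (.t0 i 2) (.v (vIdx i 1)) (.t0 i 3)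
  | t0X0 (i : Fin m) : BEdge0 c0 c1 c2 (.t0 i 3) (.X (c0 i)) (.t0 i 4)
  | t0v2 (i : Fin m) : BEdge0 c0 c1 c2 (.t0 i 4) (.v (vIdx i 2)) (.t0 i 5)
  | t0X1 (i : Fin m) : BEdge0 c0 c1 c2 (.t0 i 5) (.X (c1 i)) (.t0 i 6)
  | t0v3 (i : Fin m) : BEdge0 c0 c1 c2 (.t0 i 6) (.v (vIdx i 3)) (.t0 i 7)
  | t0X2 (i : Fin m) : BEdge0 c0 c1 c2 (.t0 i 7) (.X (c2 i)) (.t0 i 8)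
  | t0v4 (i : Fin m) : BEdge0 c0 c1 c2 (.t0 i 8) (.v (vIdx i 4)) (.t0 i 9)
  | t0v5 (i : Fin m) : BEdge0 c0 c1 c2 (.t0 i 9) (.v (vIdx i 5)) (.t0 i 10)
  | t0k0b (i : Fin m) : BEdge0 c0 c1 c2 (.t0 i 10) .k0 (.t0 i 11)
  -- T_{i,1}
  | t1X0 (i : Fin m) : BEdge0 c0 c1 c2 (.t1 i 0) (.X (c0 i)) (.t1 i 1)
  | t1v6 (i : Fin m) : BEdge0 c0 c1 c2 (.t1 i 1) (.v (vIdx i 6)) (.t1 i 2)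
  | t1X2 (i : Fin m) : BEdge0 c0 c1 c2 (.t1 i 2) (.X (c2 i)) (.t1 i 3)
  -- T_{i,0}'
  | t0'k1a (i : Fin m) : BEdge0 c0 c1 c2 (.t0' i 0) .k1 (.t0' i 1)
  | t0'v0 (i : Fin m) : BEdge0 c0 c1 c2 (.t0' i 1) (.v' (vIdx i 0)) (.t0' i 2)
  | t0'v1 (i : Fin m) : BEdge0 c0 c1 c2 (.t0' i 2) (.v' (vIdx i 1)) (.t0' i 3)
  | t0'X0 (i : Fin m) : BEdge0 c0 c1 c2 (.t0' i 3) (.X' (c0 i)) (.t0' i 4)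
  | t0'v2 (i : Fin m) : BEdge0 c0 c1 c2 (.t0' i 4) (.v' (vIdx i 2)) (.t0' i 5)
  | t0'X1 (i : Fin m) : BEdge0 c0 c1 c2 (.t0' i 5) (.X' (c1 i)) (.t0' i 6)
  | t0'v3 (i : Fin m) : BEdge0 c0 c1 c2 (.t0' i 6) (.v' (vIdx i 3)) (.t0' i 7)
  | t0'X2 (i : Fin m) : BEdge0 c0 c1 c2 (.t0' i 7) (.X' (c2 i)) (.t0' i 8)
  | t0'v4 (i : Fin m) : BEdge0 c0 c1 c2 (.t0' i 8) (.v' (vIdx i 4)) (.t0' i 9)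
  | t0'v5 (i : Fin m) : BEdge0 c0 c1 c2 (.t0' i 9) (.v' (vIdx i 5)) (.t0' i 10)
  | t0'k1b (i : Fin m) : BEdge0 c0 c1 c2 (.t0' i 10) .k1 (.t0' i 11)
  -- T_{i,1}'
  | t1'X0 (i : Fin m) : BEdge0 c0 c1 c2 (.t1' i 0) (.X' (c0 i)) (.t1' i 1)
  | t1'v6 (i : Fin m) : BEdge0 c0 c1 c2 (.t1' i 1) (.v' (vIdx i 6)) (.t1' i 2)
  | t1'X2 (i : Fin m) : BEdge0 c0 c1 c2 (.t1' i 2) (.X' (c2 i)) (.t1' i 3)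
  -- connector paths ι ⊕₀ ⊥₀ ⊕₁ ⊥₁ … and ι ⊗₀ ⊤₀ ⊗₁ ⊤₁ …
  | oplus (j : Fin (2 * m)) : BEdge0 c0 c1 c2 (prevBot j) (.oplus j) (.bot j)
  | otimes (j : Fin (14 * m)) : BEdge0 c0 c1 c2 (prevTop j) (.otimes j) (.top j)
  -- ⊤_j ⊙_j s_j and ⊤_j ⊙_j' s_j'
  | odot (j : Fin (14 * m)) : BEdge0 c0 c1 c2 (.top j) (.odot j) (gadgetStart j)
  | odot' (j : Fin (14 * m)) : BEdge0 c0 c1 c2 (.top j) (.odot' j) (gadgetStart' j)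
  -- ⊥_{2i} ⊖_{2i} t_{i,0,0}, ⊥_{2i+1} ⊖_{2i+1} t_{i,1,0} and primed versions
  | ominus0 (i : Fin m) :
      BEdge0 c0 c1 c2 (.bot ⟨2 * i.val, by have := i.isLt; omega⟩)
        (.ominus ⟨2 * i.val, by have := i.isLt; omega⟩) (.t0 i 0)
  | ominus1 (i : Fin m) :
      BEdge0 c0 c1 c2 (.bot ⟨2 * i.val + 1, by have := i.isLt; omega⟩)
        (.ominus ⟨2 * i.val + 1, by have := i.isLt; omega⟩) (.t1 i 0)
  | ominus0' (i : Fin m) :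
      BEdge0 c0 c1 c2 (.bot ⟨2 * i.val, by have := i.isLt; omega⟩)
        (.ominus' ⟨2 * i.val, by have := i.isLt; omega⟩) (.t0' i 0)
  | ominus1' (i : Fin m) :
      BEdge0 c0 c1 c2 (.bot ⟨2 * i.val + 1, by have := i.isLt; omega⟩)
        (.ominus' ⟨2 * i.val + 1, by have := i.isLt; omega⟩) (.t1' i 0)

/-- The (bi-directed) edge relation of `A_φ`: the symmetric closure of the
listed edges. -/
def BEdge {m : ℕ} (c0 c1 c2 : Fin m → Fin m) :
    BState m → BEvent m → BState m → Prop :=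
  fun s e s' => BEdge0 c0 c1 c2 s e s' ∨ BEdge0 c0 c1 c2 s' e s


/-- The constant value fixed by a non-`swap`, non-`nop` save interaction. -/
def constOf : Interaction → Bool
  | .set => true
  | .used => true
  | _ => false

lemma classify {τ : Set Interaction} (hnf : Interaction.nop ∉ τ)
    {i : Interaction} (hi : i ∈ τ) {a b : Bool}
    (hab : i.eval a = some b) (hba : i.eval b = some a) :
    (i = .swap ∧ b = !a) ∨ (i ≠ .swap ∧ a = constOf i ∧ b = constOf i) := by
  cases i <;> cases a <;> cases b <;> simp_all [Interaction.eval, constOf]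

lemma chain_core (b : Bool) (e0 e1 e2 : Interaction)
    (t1 t2 t3 t4 t5 t6 t7 t8 t9 t10 u0 u1 u2 u3 : Bool)
    (ht1 : t1 = b) (ht10 : t10 = b)
    (h12 : t2 = !t1) (h23 : t3 = !t2) (h45 : t5 = !t4) (h67 : t7 = !t6)
    (h89 : t9 = !t8) (h910 : t10 = !t9) (hu : u2 = !u1)
    (h0 : (e0 = .swap ∧ t4 = !t3) ∨ (e0 ≠ .swap ∧ t3 = constOf e0 ∧ t4 = constOf e0))
    (h1 : (e1 = .swap ∧ t6 = !t5) ∨ (e1 ≠ .swap ∧ t5 = constOf e1 ∧ t6 = constOf e1))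
    (h2 : (e2 = .swap ∧ t8 = !t7) ∨ (e2 ≠ .swap ∧ t7 = constOf e2 ∧ t8 = constOf e2))
    (h0' : (e0 = .swap ∧ u1 = !u0) ∨ (e0 ≠ .swap ∧ u0 = constOf e0 ∧ u1 = constOf e0))
    (h2' : (e2 = .swap ∧ u3 = !u2) ∨ (e2 ≠ .swap ∧ u2 = constOf e2 ∧ u3 = constOf e2)) :
    (e0 ≠ .swap ∧ e1 = .swap ∧ e2 = .swap) ∨
      (e0 = .swap ∧ e1 ≠ .swap ∧ e2 = .swap) ∨
      (e0 = .swap ∧ e1 = .swap ∧ e2 ≠ .swap) := by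
  rcases h0 with ⟨p0, q0⟩ | ⟨p0, q0, r0⟩ <;>
    rcases h1 with ⟨p1, q1⟩ | ⟨p1, q1, r1⟩ <;>
    rcases h2 with ⟨p2, q2⟩ | ⟨p2, q2, r2⟩ <;>
    rcases h0' with ⟨p0', q0'⟩ | ⟨p0', q0', r0'⟩ <;>
    rcases h2' with ⟨p2', q2'⟩ | ⟨p2', q2', r2'⟩ <;>
    cases b <;> simp_all

/-- for a `nop`-free type `τ` with `swap ∈ τ` and
`τ ∩ save ≠ ∅`, and an instance `φ` of cubic monotone 1-in-3 3SAT, if the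
bi-directed TS `A_φ` has the `τ`-SSP, then `φ` has a one-in-three model. -/
theorem Aphi_bidirected_ssp_implies_model
    {m : ℕ} (c0 c1 c2 : Fin m → Fin m) (hcubic : CubicMonotone c0 c1 c2)
    (τ : Set Interaction) (hnf : Interaction.nop ∉ τ)
    (hswap : Interaction.swap ∈ τ) (hsave : (τ ∩ saveSet).Nonempty)
    (hssp : HasSSP (BEdge c0 c1 c2) τ) :
    ∃ M : Set (Fin m), OneInThreeModel c0 c1 c2 M := by
  rcases Nat.eq_zero_or_pos m with hm | hm
  · subst hm
    exact ⟨∅, fun i => i.elim0⟩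
  have h7 : 0 < 7 * m := by omega
  set i0 : Fin (7 * m) := ⟨0, h7⟩ with hi0
  have hne : (BState.g i0 2 : BState m) ≠ BState.g i0 4 := by
    intro h
    injection h with h1 h2
    exact absurd h2 (by decide)
  obtain ⟨sup, sig, ⟨hmem, hE⟩, hsep⟩ := hssp (BState.g i0 2) (BState.g i0 4) hne
  have cls : ∀ {s e s'}, BEdge0 c0 c1 c2 s e s' →
      (sig e = .swap ∧ sup s' = !sup s) ∨
        (sig e ≠ .swap ∧ sup s = constOf (sig e) ∧ sup s' = constOf (sig e)) :=
    fun h => classify hnf (hmem _) (hE _ _ _ (Or.inl h)) (hE _ _ _ (Or.inr h))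
  rcases cls (BEdge0.gk0 i0) with ⟨hk0, e23⟩ | ⟨hk0, e2, e3⟩ <;>
    rcases cls (BEdge0.gk1 i0) with ⟨hk1, e34⟩ | ⟨hk1, e3', e4⟩
  · -- both k0 and k1 swap: sup g4 = sup g2, contradiction
    exact absurd (by rw [e34, e23, Bool.not_not]) (Ne.symm hsep)
  · -- k0 swap, k1 non-swap: use the primed gadgets
    have hv : ∀ j : Fin (7 * m), sig (.v' j) = .swap := by
      intro j
      rcases cls (BEdge0.g'k1 j) with ⟨h, _⟩ | ⟨_, hg2, hg3⟩
      · exact absurd h hk1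
      rcases cls (BEdge0.f'k1 j) with ⟨h, _⟩ | ⟨_, hf3, hf4⟩
      · exact absurd h hk1
      rcases cls (BEdge0.f'k0 j) with ⟨_, hf23⟩ | ⟨h, _, _⟩
      swap
      · exact absurd hk0 h
      rcases cls (BEdge0.g'w j) with ⟨hw, hg12⟩ | ⟨hw, hg1, hg2'⟩ <;>
        rcases cls (BEdge0.f'w j) with ⟨hw', hf12⟩ | ⟨hw', hf1, hf2'⟩
      · -- w' swap
        rcases cls (BEdge0.g'v j) with ⟨h, _⟩ | ⟨hv1, hg0, hg1'⟩
        · exact h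
        rcases cls (BEdge0.f'v j) with ⟨h, _⟩ | ⟨hv2, hf0, hf1'⟩
        · exact h
        exfalso
        cases hA : constOf (sig (BEvent.k1 : BEvent m)) <;>
          cases hB : constOf (sig (BEvent.v' j)) <;> simp_all
      · exact absurd hw hw'
      · exact absurd hw' hw
      · exfalso
        cases hA : constOf (sig (BEvent.k1 : BEvent m)) <;>
          cases hB : constOf (sig (BEvent.w' j)) <;> simp_all
    have key : ∀ i : Fin m,
        (sig (.X' (c0 i)) ≠ .swap ∧ sig (.X' (c1 i)) = .swap ∧ sig (.X' (c2 i)) = .swap) ∨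
          (sig (.X' (c0 i)) = .swap ∧ sig (.X' (c1 i)) ≠ .swap ∧ sig (.X' (c2 i)) = .swap) ∨
          (sig (.X' (c0 i)) = .swap ∧ sig (.X' (c1 i)) = .swap ∧ sig (.X' (c2 i)) ≠ .swap) := by
      intro i
      rcases cls (BEdge0.t0'k1a i) with ⟨h, _⟩ | ⟨_, ht0, ht1⟩
      · exact absurd h hk1
      rcases cls (BEdge0.t0'k1b i) with ⟨h, _⟩ | ⟨_, ht10, ht11⟩
      · exact absurd h hk1
      rcases cls (BEdge0.t0'v0 i) with ⟨_, h12⟩ | ⟨h, _⟩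
      swap; · exact absurd (hv _) h
      rcases cls (BEdge0.t0'v1 i) with ⟨_, h23⟩ | ⟨h, _⟩
      swap; · exact absurd (hv _) h
      rcases cls (BEdge0.t0'v2 i) with ⟨_, h45⟩ | ⟨h, _⟩
      swap; · exact absurd (hv _) h
      rcases cls (BEdge0.t0'v3 i) with ⟨_, h67⟩ | ⟨h, _⟩
      swap; · exact absurd (hv _) h
      rcases cls (BEdge0.t0'v4 i) with ⟨_, h89⟩ | ⟨h, _⟩
      swap; · exact absurd (hv _) h
      rcases cls (BEdge0.t0'v5 i) with ⟨_, h910⟩ | ⟨h, _⟩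
      swap; · exact absurd (hv _) h
      rcases cls (BEdge0.t1'v6 i) with ⟨_, hu⟩ | ⟨h, _⟩
      swap; · exact absurd (hv _) h
      exact chain_core (constOf (sig .k1)) _ _ _ _ _ _ _ _ _ _ _ _ _ _ _ _ _
        ht1 ht10 h12 h23 h45 h67 h89 h910 hu
        (cls (BEdge0.t0'X0 i)) (cls (BEdge0.t0'X1 i)) (cls (BEdge0.t0'X2 i))
        (cls (BEdge0.t1'X0 i)) (cls (BEdge0.t1'X2 i))
    refine ⟨{x | sig (.X' x) ≠ .swap}, fun i => ?_⟩
    rcases key i with ⟨a, b, c⟩ | ⟨a, b, c⟩ | ⟨a, b, c⟩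
    · exact Or.inl ⟨a, fun h => h b, fun h => h c⟩
    · exact Or.inr (Or.inl ⟨fun h => h a, b, fun h => h c⟩)
    · exact Or.inr (Or.inr ⟨fun h => h a, fun h => h b, c⟩)
  · -- k1 swap, k0 non-swap: use the unprimed gadgets
    have hv : ∀ j : Fin (7 * m), sig (.v j) = .swap := by
      intro j
      rcases cls (BEdge0.gk0 j) with ⟨h, _⟩ | ⟨_, hg2, hg3⟩
      · exact absurd h hk0
      rcases cls (BEdge0.fk0 j) with ⟨h, _⟩ | ⟨_, hf3, hf4⟩
      · exact absurd h hk0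
      rcases cls (BEdge0.fk1 j) with ⟨_, hf23⟩ | ⟨h, _, _⟩
      swap
      · exact absurd hk1 h
      rcases cls (BEdge0.gw j) with ⟨hw, hg12⟩ | ⟨hw, hg1, hg2'⟩ <;>
        rcases cls (BEdge0.fw j) with ⟨hw', hf12⟩ | ⟨hw', hf1, hf2'⟩
      · rcases cls (BEdge0.gv j) with ⟨h, _⟩ | ⟨hv1, hg0, hg1'⟩
        · exact h
        rcases cls (BEdge0.fv j) with ⟨h, _⟩ | ⟨hv2, hf0, hf1'⟩
        · exact h
        exfalso
        cases hA : constOf (sig (BEvent.k0 : BEvent m)) <;>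
          cases hB : constOf (sig (BEvent.v j)) <;> simp_all
      · exact absurd hw hw'
      · exact absurd hw' hw
      · exfalso
        cases hA : constOf (sig (BEvent.k0 : BEvent m)) <;>
          cases hB : constOf (sig (BEvent.w j)) <;> simp_all
    have key : ∀ i : Fin m,
        (sig (.X (c0 i)) ≠ .swap ∧ sig (.X (c1 i)) = .swap ∧ sig (.X (c2 i)) = .swap) ∨
          (sig (.X (c0 i)) = .swap ∧ sig (.X (c1 i)) ≠ .swap ∧ sig (.X (c2 i)) = .swap) ∨
          (sig (.X (c0 i)) = .swap ∧ sig (.X (c1 i)) = .swap ∧ sig (.X (c2 i)) ≠ .swap) := by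
      intro i
      rcases cls (BEdge0.t0k0a i) with ⟨h, _⟩ | ⟨_, ht0, ht1⟩
      · exact absurd h hk0
      rcases cls (BEdge0.t0k0b i) with ⟨h, _⟩ | ⟨_, ht10, ht11⟩
      · exact absurd h hk0
      rcases cls (BEdge0.t0v0 i) with ⟨_, h12⟩ | ⟨h, _⟩
      swap; · exact absurd (hv _) h
      rcases cls (BEdge0.t0v1 i) with ⟨_, h23⟩ | ⟨h, _⟩
      swap; · exact absurd (hv _) h
      rcases cls (BEdge0.t0v2 i) with ⟨_, h45⟩ | ⟨h, _⟩
      swap; · exact absurd (hv _) h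
      rcases cls (BEdge0.t0v3 i) with ⟨_, h67⟩ | ⟨h, _⟩
      swap; · exact absurd (hv _) h
      rcases cls (BEdge0.t0v4 i) with ⟨_, h89⟩ | ⟨h, _⟩
      swap; · exact absurd (hv _) h
      rcases cls (BEdge0.t0v5 i) with ⟨_, h910⟩ | ⟨h, _⟩
      swap; · exact absurd (hv _) h
      rcases cls (BEdge0.t1v6 i) with ⟨_, hu⟩ | ⟨h, _⟩
      swap; · exact absurd (hv _) h
      exact chain_core (constOf (sig .k0)) _ _ _ _ _ _ _ _ _ _ _ _ _ _ _ _ _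
        ht1 ht10 h12 h23 h45 h67 h89 h910 hu
        (cls (BEdge0.t0X0 i)) (cls (BEdge0.t0X1 i)) (cls (BEdge0.t0X2 i))
        (cls (BEdge0.t1X0 i)) (cls (BEdge0.t1X2 i))
    refine ⟨{x | sig (.X x) ≠ .swap}, fun i => ?_⟩
    rcases key i with ⟨a, b, c⟩ | ⟨a, b, c⟩ | ⟨a, b, c⟩
    · exact Or.inl ⟨a, fun h => h b, fun h => h c⟩
    · exact Or.inr (Or.inl ⟨fun h => h a, b, fun h => h c⟩)
    · exact Or.inr (Or.inr ⟨fun h => h a, fun h => h b, c⟩)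
  · -- both non-swap: sup g2 = sup g3 = sup g4, contradiction
    exact absurd (by rw [e2, ← e3, e3', ← e4]) hsep
end
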